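/- arXiv:2305.06860 — 6 statements merged into one kernel-verified Lean document; each statement's English description precedes it below -/
import Mathlib

section
/- Let n, m, m' ∈ ℕ, let ℓ₁,…,ℓ_m be linearly independent linear forms in ℝ[X₁,…,Xₙ]₁ and λ₁,…,λ_m ∈ ℝ \ {0}, and let l₁,…,l_{m'} be linear forms and ρ₁,…,ρ_{m'} ∈ ℝ \ {0}. If Σ_{i=1}^m λᵢ ℓᵢ^d = Σ_{j=1}^{m'} ρⱼ lⱼ^d for both d = 2 and d = 3, then m' ≥ m; moreover, if m' = m, then the multiset {(l₁,ρ₁),…,(l_m,ρ_m)} equals {(ℓ₁,λ₁),…,(ℓ_m,λ_m)}. -/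
/-!
Evaluating linear forms at points turns them into linear functionals on `ℝⁿ`, and polarizing the
identities between the quadrics and the cubics gives equal symmetric bilinear and trilinear forms
`∑ λᵢ ℓᵢ(x) ℓᵢ(y)` and `∑ λᵢ ℓᵢ(x) ℓᵢ(y) ℓᵢ(z)`. Let the `vₖ` be dual to the independent `ℓᵢ`.
Contracting the trilinear form with `vₖ, vₖ` gives `λₖ ℓₖ = ∑ⱼ ρⱼ lⱼ(vₖ)² lⱼ`, so the `ℓᵢ` lie in
the span of the `lⱼ` and `m ≤ m'`. If `m' = m`, both families are bases of the same space, so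
`lⱼ = ∑ᵢ lⱼ(vᵢ) ℓᵢ`. Contracting with `vᵢ, vₖ, wⱼ` (the `wⱼ` dual to the `lⱼ`) and comparing with
the bilinear form shows that the coordinates `lⱼ(vᵢ)`, `i` varying, are orthogonal idempotents;
hence `lⱼ = ℓ_{σ j}` for an injective `σ`, and then the bilinear form gives `ρⱼ = λ_{σ j}`.
-/

open MvPolynomial Module Submodule

theorem exists_eq_single_of_mul_eq_ite {M ι : Type*} [MonoidWithZero M] [IsLeftCancelMulZero M]
    [DecidableEq ι] {r : ι → M} (hr : ∀ i k, r i * r k = if i = k then r i else 0)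
    (h0 : r ≠ 0) : ∃ i, r = Pi.single i 1 := by
  obtain ⟨i, hi⟩ := Function.ne_iff.mp h0
  have hii : r i = 1 := mul_left_cancel₀ hi (by simpa using hr i i)
  refine ⟨i, funext fun k => ?_⟩
  by_cases hk : k = i
  · subst hk; simp [hii]
  · simpa [hk, hii, Ne.symm hk] using hr i k

section LinearForms

variable {K V ι κ : Type*} [Field K] [AddCommGroup V] [Module K V]

theorem Module.Dual.exists_apply_eq_ite_of_linearIndependent [Finite ι] [DecidableEq ι]
    {f : ι → Dual K V} (hf : LinearIndependent K f) :
    ∃ v : ι → V, ∀ i k, f i (v k) = if i = k then 1 else 0 := by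
  have hsurj : Function.Surjective (LinearMap.pi f) := by
    have hf' : LinearIndependent K fun i => ⇑(f i) :=
      hf.map' (LinearMap.ltoFun K V K K) (LinearMap.ker_eq_bot.mpr DFunLike.coe_injective)
    rw [← span_flip_eq_top_iff_linearIndependent] at hf'
    rw [← LinearMap.range_eq_top, eq_top_iff, ← hf', span_le]
    rintro _ ⟨x, rfl⟩
    exact ⟨x, rfl⟩
  choose v hv using fun k => hsurj (Pi.single k 1)
  exact ⟨v, fun i k => by simpa [Pi.single_apply] using congrFun (hv k) i⟩

theorem Module.Dual.eq_sum_apply_smul_of_mem_span [Fintype ι] [DecidableEq ι]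
    {f : ι → Dual K V} {v : ι → V} (hv : ∀ i k, f i (v k) = if i = k then 1 else 0)
    {φ : Dual K V} (hφ : φ ∈ span K (Set.range f)) : φ = ∑ i, φ (v i) • f i := by
  obtain ⟨c, rfl⟩ := (mem_span_range_iff_exists_fun K).mp hφ
  simp [hv]

variable [Fintype ι] [Fintype κ]

def weightedPowerSum (a : ι → K) (f : ι → Dual K V) (d : ℕ) (x : V) : K :=
  ∑ i, a i * f i x ^ d

def weightedPolar₂ (a : ι → K) (f : ι → Dual K V) (x y : V) : K :=
  ∑ i, a i * (f i x * f i y)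

def weightedPolar₃ (a : ι → K) (f : ι → Dual K V) (x y z : V) : K :=
  ∑ i, a i * (f i x * f i y * f i z)

theorem four_mul_weightedPolar₂ (a : ι → K) (f : ι → Dual K V) (x y : V) :
    4 * weightedPolar₂ a f x y
      = weightedPowerSum a f 2 (x + y) - weightedPowerSum a f 2 (x - y) := by
  simp only [weightedPolar₂, weightedPowerSum, map_add, map_sub, Finset.mul_sum,
    ← Finset.sum_sub_distrib]
  exact Finset.sum_congr rfl fun _ _ => by ring

theorem twentyFour_mul_weightedPolar₃ (a : ι → K) (f : ι → Dual K V) (x y z : V) :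
    24 * weightedPolar₃ a f x y z
      = weightedPowerSum a f 3 (x + y + z) - weightedPowerSum a f 3 (x + y - z)
        - weightedPowerSum a f 3 (x - y + z) + weightedPowerSum a f 3 (x - y - z) := by
  simp only [weightedPolar₃, weightedPowerSum, map_add, map_sub, Finset.mul_sum,
    ← Finset.sum_sub_distrib, ← Finset.sum_add_distrib]
  exact Finset.sum_congr rfl fun _ _ => by ring

variable {f : ι → Dual K V} {a : ι → K} {g : κ → Dual K V} {b : κ → K}

theorem weightedPolar₂_eq_of_weightedPowerSum_eq [CharZero K]
    (h : weightedPowerSum a f 2 = weightedPowerSum b g 2) :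
    weightedPolar₂ a f = weightedPolar₂ b g := by
  ext x y
  refine mul_left_cancel₀ (by norm_num : (4 : K) ≠ 0) ?_
  rw [four_mul_weightedPolar₂, four_mul_weightedPolar₂, h]

theorem weightedPolar₃_eq_of_weightedPowerSum_eq [CharZero K]
    (h : weightedPowerSum a f 3 = weightedPowerSum b g 3) :
    weightedPolar₃ a f = weightedPolar₃ b g := by
  ext x y z
  refine mul_left_cancel₀ (by norm_num : (24 : K) ≠ 0) ?_
  rw [twentyFour_mul_weightedPolar₃, twentyFour_mul_weightedPolar₃, h]

theorem span_range_le_of_weightedPolar₃_eq (hf : LinearIndependent K f) (ha : ∀ i, a i ≠ 0)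
    (hT : weightedPolar₃ a f = weightedPolar₃ b g) :
    span K (Set.range f) ≤ span K (Set.range g) := by
  classical
  obtain ⟨v, hv⟩ := Dual.exists_apply_eq_ite_of_linearIndependent hf
  rw [span_le]
  rintro _ ⟨k, rfl⟩
  have hk : a k • f k = ∑ j, (b j * g j (v k) ^ 2) • g j := by
    ext y
    simpa [weightedPolar₃, hv, sq, mul_assoc] using congr_fun₃ hT (v k) (v k) y
  refine (smul_mem_iff _ (ha k)).mp ?_
  rw [hk]
  exact sum_mem fun j _ => smul_mem _ _ (subset_span ⟨j, rfl⟩)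

theorem card_le_card_of_weightedPolar₃_eq (hf : LinearIndependent K f) (ha : ∀ i, a i ≠ 0)
    (hT : weightedPolar₃ a f = weightedPolar₃ b g) :
    Fintype.card ι ≤ Fintype.card κ := by
  have := FiniteDimensional.span_of_finite K (Set.finite_range g)
  calc Fintype.card ι = finrank K (span K (Set.range f)) := (finrank_span_eq_card hf).symm
    _ ≤ finrank K (span K (Set.range g)) :=
      finrank_mono (span_range_le_of_weightedPolar₃_eq hf ha hT)
    _ ≤ Fintype.card κ := finrank_range_le_card g

theorem exists_equiv_of_weightedPolar₂_eq_of_weightedPolar₃_eq (hf : LinearIndependent K f)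
    (ha : ∀ i, a i ≠ 0) (hb : ∀ j, b j ≠ 0) (hcard : Fintype.card ι = Fintype.card κ)
    (hB : weightedPolar₂ a f = weightedPolar₂ b g)
    (hT : weightedPolar₃ a f = weightedPolar₃ b g) :
    ∃ σ : κ ≃ ι, ∀ j, g j = f (σ j) ∧ b j = a (σ j) := by
  classical
  have := FiniteDimensional.span_of_finite K (Set.finite_range g)
  have hle := span_range_le_of_weightedPolar₃_eq hf ha hT
  have hrank : finrank K (span K (Set.range f)) = Fintype.card κ := by
    rw [finrank_span_eq_card hf, hcard]
  have hg : LinearIndependent K g :=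
    linearIndependent_iff_card_le_finrank_span.mpr (hrank ▸ finrank_mono hle)
  have hspan : span K (Set.range f) = span K (Set.range g) :=
    eq_of_le_of_finrank_le hle (hrank ▸ finrank_range_le_card g)
  obtain ⟨v, hv⟩ := Dual.exists_apply_eq_ite_of_linearIndependent hf
  obtain ⟨w, hw⟩ := Dual.exists_apply_eq_ite_of_linearIndependent hg
  have hrepr (j : κ) : g j = ∑ i, g j (v i) • f i :=
    Dual.eq_sum_apply_smul_of_mem_span hv (hspan ▸ subset_span ⟨j, rfl⟩)
  have hidem (j : κ) (i k : ι) :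
      g j (v i) * g j (v k) = if i = k then g j (v i) else 0 := by
    have hT' := congr_fun₃ hT (v i) (v k) (w j)
    have hB' := congr_fun₂ hB (v i) (w j)
    simp only [weightedPolar₂, weightedPolar₃, hv, hw, ite_mul, mul_ite, one_mul, mul_one,
      zero_mul, mul_zero, Finset.sum_ite_eq', Finset.mem_univ, if_true]
      at hT' hB'
    refine mul_left_cancel₀ (hb j) ?_
    by_cases h : i = k
    · subst h; simpa [hB'] using hT'.symm
    · simpa [h, Ne.symm h] using hT'.symm
  have hne (j : κ) : (fun i => g j (v i)) ≠ 0 := by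
    intro h0
    apply hg.ne_zero j
    rw [hrepr j]
    simp [funext_iff.mp h0]
  choose σ hσ using fun j => exists_eq_single_of_mul_eq_ite (hidem j) (hne j)
  have hgσ (j : κ) : g j = f (σ j) := by
    rw [hrepr j]
    simp [fun i => congrFun (hσ j) i, Pi.single_apply]
  have hσinj : Function.Injective σ := fun j j' h => hg.injective (by rw [hgσ, hgσ, h])
  refine ⟨.ofBijective σ ((Fintype.bijective_iff_injective_and_card σ).mpr ⟨hσinj, hcard.symm⟩),
    fun j => ⟨hgσ j, ?_⟩⟩
  have hfw : f (σ j) (w j) = 1 := by rw [← hgσ, hw, if_pos rfl]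
  have hgv : g j (v (σ j)) = 1 := by rw [hgσ, hv, if_pos rfl]
  simpa [weightedPolar₂, hv, hw, hfw, hgv] using (congr_fun₂ hB (v (σ j)) (w j)).symm

end LinearForms

namespace MvPolynomial

variable {σ R : Type*} [CommRing R]

theorem isLinearMap_eval_of_isHomogeneous_one {p : MvPolynomial σ R} (hp : p.IsHomogeneous 1) :
    IsLinearMap R fun x : σ → R => eval x p := by
  rw [← mem_homogeneousSubmodule, homogeneousSubmodule_one_eq_span_X] at hp
  induction hp using span_induction with
  | mem _ h => obtain ⟨i, rfl⟩ := h; exact ⟨fun x y => by simp, fun c x => by simp⟩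
  | zero => exact ⟨fun x y => by simp, fun c x => by simp⟩
  | add p q _ _ ihp ihq =>
    exact ⟨fun x y => by simp [ihp.map_add, ihq.map_add]; ring,
      fun c x => by simp [ihp.map_smul, ihq.map_smul]; ring⟩
  | smul c p _ ihp =>
    exact ⟨fun x y => by simp [ihp.map_add]; ring, fun c x => by simp [ihp.map_smul]; ring⟩

variable (σ R) in
noncomputable def linearFormEval : homogeneousSubmodule σ R 1 →ₗ[R] Dual R (σ → R) :=
  LinearMap.mk₂ R (fun p x => eval x (p : MvPolynomial σ R)) (fun p q x => by simp)
    (fun c p x => by simp) (fun p => (isLinearMap_eval_of_isHomogeneous_one p.2).map_add)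
    (fun c p x => (isLinearMap_eval_of_isHomogeneous_one p.2).map_smul c x)

@[simp]
theorem linearFormEval_apply (p : homogeneousSubmodule σ R 1) (x : σ → R) :
    linearFormEval σ R p x = eval x (p : MvPolynomial σ R) :=
  rfl

theorem linearFormEval_injective [IsDomain R] [Infinite R] :
    Function.Injective (linearFormEval σ R) :=
  fun _ _ h => Subtype.ext <| MvPolynomial.funext fun x => LinearMap.congr_fun h x

end MvPolynomial

theorem stmt1 (n m m' : ℕ)
    (ℓ : Fin m → MvPolynomial (Fin n) ℝ) (lam : Fin m → ℝ)
    (hℓ : ∀ i, (ℓ i).IsHomogeneous 1) (hli : LinearIndependent ℝ ℓ)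
    (hlam : ∀ i, lam i ≠ 0)
    (l : Fin m' → MvPolynomial (Fin n) ℝ) (ρ : Fin m' → ℝ)
    (hl : ∀ j, (l j).IsHomogeneous 1) (hρ : ∀ j, ρ j ≠ 0)
    (h2 : ∑ i, lam i • ℓ i ^ 2 = ∑ j, ρ j • l j ^ 2)
    (h3 : ∑ i, lam i • ℓ i ^ 3 = ∑ j, ρ j • l j ^ 3) :
    m ≤ m' ∧ (m' = m →
      Multiset.map (fun j => (l j, ρ j)) Finset.univ.val
        = Multiset.map (fun i => (ℓ i, lam i)) Finset.univ.val) := by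
  set L := fun i => linearFormEval (Fin n) ℝ ⟨ℓ i, hℓ i⟩
  set L' := fun j => linearFormEval (Fin n) ℝ ⟨l j, hl j⟩
  have hL : LinearIndependent ℝ L := by
    have h : LinearIndependent ℝ fun i => (⟨ℓ i, hℓ i⟩ : homogeneousSubmodule (Fin n) ℝ 1) :=
      .of_comp (homogeneousSubmodule (Fin n) ℝ 1).subtype hli
    exact h.map' _ (LinearMap.ker_eq_bot.mpr linearFormEval_injective)
  have hpow (d : ℕ) (hd : ∑ i, lam i • ℓ i ^ d = ∑ j, ρ j • l j ^ d) :
      weightedPowerSum lam L d = weightedPowerSum ρ L' d := by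
    ext x
    simpa [weightedPowerSum, L, L'] using congrArg (eval x) hd
  have hB := weightedPolar₂_eq_of_weightedPowerSum_eq (hpow 2 h2)
  have hT := weightedPolar₃_eq_of_weightedPowerSum_eq (hpow 3 h3)
  refine ⟨by simpa using card_le_card_of_weightedPolar₃_eq hL hlam hT, fun hm => ?_⟩
  obtain ⟨e, he⟩ :=
    exists_equiv_of_weightedPolar₂_eq_of_weightedPolar₃_eq hL hlam hρ (by simp [hm]) hB hT
  have hpair (j : Fin m') : (l j, ρ j) = (ℓ (e j), lam (e j)) :=
    Prod.ext (congrArg Subtype.val (linearFormEval_injective (he j).1)) (he j).2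
  rw [funext hpair, ← Multiset.map_univ_val_equiv e, Multiset.map_map]
  rfl
end

section
/- Let n, k, m ∈ ℕ, let q₁,…,q_m ∈ ℝ[X]_k be linearly independent and λ₁,…,λ_m > 0, and set f_d = Σ_{i=1}^m λᵢ qᵢ^d for d = 2, 3. Assume (i) the linear span of the threefold products {qᵢ qⱼ q_l : 1 ≤ i, j, l ≤ m} has dimension (m+2 choose 3), and (ii) sosupp f₂ equals the linear span of q₁,…,q_m. Then for any p₁,…,p_{m'} ∈ ℝ[X]_k and μ₁,…,μ_{m'} > 0 with f_d = Σ_{j=1}^{m'} μⱼ pⱼ^d for d = 2, 3, one has m' ≥ m, and if m' = m then the multiset {(p₁,μ₁),…,(p_m,μ_m)} equals {(q₁,λ₁),…,(q_m,λ_m)}. -/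
lemma aux_perm2 {α : Type*} {x y u v : α} (h : ({x, y} : Multiset α) = {u, v}) :
    (x = u ∧ y = v) ∨ (x = v ∧ y = u) := by
  have hmem : x ∈ ({u, v} : Multiset α) := by
    rw [← h]; exact Multiset.mem_cons_self _ _
  simp only [Multiset.insert_eq_cons, Multiset.mem_cons, Multiset.mem_singleton] at hmem
  rcases hmem with h1 | h1
  · subst h1
    rw [show ({x, y} : Multiset α) = x ::ₘ {y} from rfl,
        show ({x, v} : Multiset α) = x ::ₘ {v} from rfl,
        Multiset.cons_inj_right, Multiset.singleton_inj] at h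
    exact Or.inl ⟨rfl, h⟩
  · subst h1
    rw [show ({u, x} : Multiset α) = u ::ₘ x ::ₘ 0 from rfl, Multiset.cons_swap,
        show ({x, y} : Multiset α) = x ::ₘ {y} from rfl,
        Multiset.cons_inj_right] at h
    have : y = u := by
      have := Multiset.singleton_inj.mp (h : ({y} : Multiset α) = {u})
      exact this
    exact Or.inr ⟨rfl, this⟩

lemma aux_perm3 {α β : Type*} (a : α → α → α → β)
    (hs1 : ∀ i j l, a i j l = a j i l) (hs2 : ∀ i j l, a i j l = a i l j)
    {i j l i' j' l' : α} (h : ({i', j', l'} : Multiset α) = {i, j, l}) :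
    a i' j' l' = a i j l := by
  have hmem : i' ∈ ({i, j, l} : Multiset α) := by
    rw [← h]; exact Multiset.mem_cons_self _ _
  simp only [Multiset.insert_eq_cons, Multiset.mem_cons, Multiset.mem_singleton] at hmem
  rcases hmem with h1 | h1 | h1
  · subst h1
    rw [show ({i', j', l'} : Multiset α) = i' ::ₘ {j', l'} from rfl,
        show ({i', j, l} : Multiset α) = i' ::ₘ {j, l} from rfl,
        Multiset.cons_inj_right] at h
    rcases aux_perm2 h with ⟨rfl, rfl⟩ | ⟨rfl, rfl⟩
    · rfl
    · exact hs2 _ _ _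
  · subst h1
    rw [show ({i, i', l} : Multiset α) = i ::ₘ i' ::ₘ {l} from rfl, Multiset.cons_swap,
        show ({i', j', l'} : Multiset α) = i' ::ₘ {j', l'} from rfl,
        Multiset.cons_inj_right] at h
    rcases aux_perm2 (h : ({j', l'} : Multiset α) = {i, l}) with ⟨rfl, rfl⟩ | ⟨rfl, rfl⟩
    · exact hs1 i' j' l'
    · exact (hs2 i' j' l').trans (hs1 i' l' j')
  · subst h1
    rw [show ({i, j, i'} : Multiset α) = i ::ₘ j ::ₘ i' ::ₘ 0 from rfl] at h
    rw [Multiset.cons_swap j i' (0 : Multiset α)] at h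
    rw [Multiset.cons_swap i i'] at h
    rw [show ({i', j', l'} : Multiset α) = i' ::ₘ {j', l'} from rfl,
        Multiset.cons_inj_right] at h
    rcases aux_perm2 (h : ({j', l'} : Multiset α) = {i, j}) with ⟨rfl, rfl⟩ | ⟨rfl, rfl⟩
    · exact (hs1 i' j' l').trans (hs2 j' i' l')
    · exact ((hs2 i' j' l').trans (hs1 i' l' j')).trans (hs2 l' i' j')

lemma aux_key3 {V : Type*} [CommRing V] [Algebra ℝ V] {m : ℕ} (q : Fin m → V)
    (hdim : Module.finrank ℝ (Submodule.span ℝ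
      {w : V | ∃ i j l : Fin m, w = q i * q j * q l}) = Nat.choose (m + 2) 3)
    (a : Fin m → Fin m → Fin m → ℝ)
    (hs1 : ∀ i j l, a i j l = a j i l) (hs2 : ∀ i j l, a i j l = a i l j)
    (hsum : ∑ i, ∑ j, ∑ l, a i j l • (q i * q j * q l) = 0) :
    ∀ i j l, a i j l = 0 := by
  classical
  set T : Sym (Fin m) 3 → V := fun s => ((s : Multiset (Fin m)).map q).prod with hT
  have hcard3 : ∀ i j l : Fin m, Multiset.card ({i, j, l} : Multiset (Fin m)) = 3 := by
    intro i j l; rfl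
  set π : Fin m × Fin m × Fin m → Sym (Fin m) 3 :=
    fun t => ⟨{t.1, t.2.1, t.2.2}, hcard3 _ _ _⟩ with hπ
  have hTπ : ∀ i j l : Fin m, T (π (i, j, l)) = q i * q j * q l := by
    intro i j l
    simp [hT, hπ, Multiset.insert_eq_cons, Multiset.map_cons, Multiset.map_singleton,
      Multiset.prod_cons, Multiset.prod_singleton, mul_assoc]
  have hrange : Set.range T = {w : V | ∃ i j l : Fin m, w = q i * q j * q l} := by
    ext w
    constructor
    · rintro ⟨s, rfl⟩
      obtain ⟨x, y, z, hs⟩ := Multiset.card_eq_three.mp (s.2 : Multiset.card s.1 = 3)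
      refine ⟨x, y, z, ?_⟩
      show ((s.1 : Multiset (Fin m)).map q).prod = _
      rw [hs]
      simp [Multiset.insert_eq_cons, mul_assoc]
    · rintro ⟨i, j, l, rfl⟩
      exact ⟨π (i, j, l), hTπ i j l⟩
  have hLI : LinearIndependent ℝ T := by
    rw [linearIndependent_iff_card_eq_finrank_span]
    rw [Set.finrank, hrange, hdim, Sym.card_sym_eq_choose]
    simp
  -- rewrite the sum fiberwise
  have hsum' : ∑ t : Fin m × Fin m × Fin m, a t.1 t.2.1 t.2.2 • T (π t) = 0 := by
    rw [Fintype.sum_prod_type]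
    simp only [Fintype.sum_prod_type]
    calc ∑ i, ∑ j, ∑ l, a i j l • T (π (i, j, l))
        = ∑ i, ∑ j, ∑ l, a i j l • (q i * q j * q l) := by
          refine Finset.sum_congr rfl fun i _ => Finset.sum_congr rfl fun j _ =>
            Finset.sum_congr rfl fun l _ => by rw [hTπ]
      _ = 0 := hsum
  have hfib : ∀ s : Sym (Fin m) 3,
      ∑ t ∈ Finset.univ.filter (fun t => π t = s), a t.1 t.2.1 t.2.2 = 0 := by
    have := Fintype.linearIndependent_iff.mp hLI
      (fun s => ∑ t ∈ Finset.univ.filter (fun t => π t = s), a t.1 t.2.1 t.2.2) ?_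
    · exact this
    · rw [← hsum', ← Finset.sum_fiberwise Finset.univ π
        (fun t => a t.1 t.2.1 t.2.2 • T (π t))]
      refine Finset.sum_congr rfl fun s _ => ?_
      rw [Finset.sum_smul]
      refine Finset.sum_congr rfl fun t ht => ?_
      rw [(Finset.mem_filter.mp ht).2]
  intro i j l
  have h0 := hfib (π (i, j, l))
  have hconst : ∀ t ∈ Finset.univ.filter (fun t => π t = π (i, j, l)),
      a t.1 t.2.1 t.2.2 = a i j l := by
    intro t ht
    have := (Finset.mem_filter.mp ht).2
    have hms : ({t.1, t.2.1, t.2.2} : Multiset (Fin m)) = {i, j, l} :=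
      congrArg Subtype.val this
    exact aux_perm3 a hs1 hs2 hms
  rw [Finset.sum_congr rfl hconst, Finset.sum_const, nsmul_eq_mul] at h0
  have hne : (i, j, l) ∈ Finset.univ.filter (fun t => π t = π (i, j, l)) := by
    simp
  have hpos : 0 < (Finset.univ.filter (fun t => π t = π (i, j, l))).card :=
    Finset.card_pos.mpr ⟨_, hne⟩
  have := mul_eq_zero.mp h0
  rcases this with h | h
  · exact absurd h (by positivity)
  · exact h

lemma aux_expand_sq {V : Type*} [CommRing V] [Algebra ℝ V] {m : ℕ}
    (c : Fin m → ℝ) (q : Fin m → V) :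
    (∑ i, c i • q i) ^ 2 = ∑ i, ∑ j, (c i * c j) • (q i * q j) := by
  rw [pow_two, Finset.sum_mul_sum]
  exact Finset.sum_congr rfl fun i _ => Finset.sum_congr rfl fun j _ =>
    smul_mul_smul_comm _ _ _ _

lemma aux_expand_cube {V : Type*} [CommRing V] [Algebra ℝ V] {m : ℕ}
    (c : Fin m → ℝ) (q : Fin m → V) :
    (∑ i, c i • q i) ^ 3 = ∑ i, ∑ j, ∑ l, (c i * c j * c l) • (q i * q j * q l) := by
  rw [pow_succ, aux_expand_sq, Finset.sum_mul]
  refine Finset.sum_congr rfl fun i _ => ?_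
  rw [Finset.sum_mul]
  refine Finset.sum_congr rfl fun j _ => ?_
  rw [Finset.mul_sum]
  refine Finset.sum_congr rfl fun l _ => ?_
  exact smul_mul_smul_comm _ _ _ _

lemma aux_key2 {V : Type*} [CommRing V] [Algebra ℝ V] {m : ℕ} (hm : 0 < m) (q : Fin m → V)
    (hdim : Module.finrank ℝ (Submodule.span ℝ
      {w : V | ∃ i j l : Fin m, w = q i * q j * q l}) = Nat.choose (m + 2) 3)
    (b : Fin m → Fin m → ℝ) (hbs : ∀ i j, b i j = b j i)
    (hsum : ∑ i, ∑ j, b i j • (q i * q j) = 0) :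
    ∀ i j, b i j = 0 := by
  classical
  set i₀ : Fin m := ⟨0, hm⟩ with hi₀
  set d : Fin m → ℝ := fun x => if x = i₀ then 1 else 0 with hd
  set a : Fin m → Fin m → Fin m → ℝ :=
    fun i j l => b i j * d l + b i l * d j + b j l * d i with ha
  have hZ : ∑ i, ∑ j, b i j • (q i * q j * q i₀) = 0 := by
    have : (∑ i, ∑ j, b i j • (q i * q j)) * q i₀ = 0 := by rw [hsum, zero_mul]
    rw [Finset.sum_mul] at this
    calc ∑ i, ∑ j, b i j • (q i * q j * q i₀)
        = ∑ i, (∑ j, b i j • (q i * q j)) * q i₀ := by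
          refine Finset.sum_congr rfl fun i _ => ?_
          rw [Finset.sum_mul]
          exact Finset.sum_congr rfl fun j _ => (smul_mul_assoc _ _ _).symm
      _ = 0 := this
  have hs1 : ∀ i j l, a i j l = a j i l := by
    intro i j l; simp only [ha]; rw [hbs i j]; ring
  have hs2 : ∀ i j l, a i j l = a i l j := by
    intro i j l; simp only [ha]; rw [hbs j l]; ring
  have hsum3 : ∑ i, ∑ j, ∑ l, a i j l • (q i * q j * q l) = 0 := by
    have e1 : ∑ i, ∑ j, ∑ l : Fin m, (b i j * d l) • (q i * q j * q l) = 0 := by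
      calc ∑ i, ∑ j, ∑ l : Fin m, (b i j * d l) • (q i * q j * q l)
          = ∑ i, ∑ j, b i j • (q i * q j * q i₀) := by
            refine Finset.sum_congr rfl fun i _ => Finset.sum_congr rfl fun j _ => ?_
            rw [show (∑ l : Fin m, (b i j * d l) • (q i * q j * q l))
                = ∑ l : Fin m, if l = i₀ then b i j • (q i * q j * q l) else 0 from
              Finset.sum_congr rfl fun l _ => by
                simp only [hd]; split_ifs with h <;> simp]
            rw [Finset.sum_ite_eq' Finset.univ i₀ fun l => b i j • (q i * q j * q l)]
            simp
        _ = 0 := hZ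
    have e2 : ∑ i, ∑ j, ∑ l : Fin m, (b i l * d j) • (q i * q j * q l) = 0 := by
      calc ∑ i, ∑ j, ∑ l : Fin m, (b i l * d j) • (q i * q j * q l)
          = ∑ i, ∑ l : Fin m, b i l • (q i * q l * q i₀) := by
            refine Finset.sum_congr rfl fun i _ => ?_
            rw [show (∑ j, ∑ l : Fin m, (b i l * d j) • (q i * q j * q l))
                = ∑ j : Fin m, if j = i₀ then ∑ l : Fin m, b i l • (q i * q l * q j) else 0 from
              Finset.sum_congr rfl fun j _ => by
                simp only [hd]; split_ifs with h <;>
                  simp [mul_comm, mul_left_comm, mul_assoc]]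
            rw [Finset.sum_ite_eq' Finset.univ i₀
              fun j => ∑ l : Fin m, b i l • (q i * q l * q j)]
            simp
        _ = 0 := hZ
    have e3 : ∑ i, ∑ j, ∑ l : Fin m, (b j l * d i) • (q i * q j * q l) = 0 := by
      calc ∑ i, ∑ j, ∑ l : Fin m, (b j l * d i) • (q i * q j * q l)
          = ∑ i : Fin m, if i = i₀ then ∑ j, ∑ l : Fin m, b j l • (q j * q l * q i) else 0 := by
            refine Finset.sum_congr rfl fun i _ => ?_
            simp only [hd]; split_ifs with h <;>
              simp [mul_comm, mul_left_comm, mul_assoc]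
        _ = 0 := by
            rw [Finset.sum_ite_eq' Finset.univ i₀
              fun i => ∑ j, ∑ l : Fin m, b j l • (q j * q l * q i)]
            simpa using hZ
    calc ∑ i, ∑ j, ∑ l, a i j l • (q i * q j * q l)
        = (∑ i, ∑ j, ∑ l : Fin m, (b i j * d l) • (q i * q j * q l))
          + (∑ i, ∑ j, ∑ l : Fin m, (b i l * d j) • (q i * q j * q l))
          + (∑ i, ∑ j, ∑ l : Fin m, (b j l * d i) • (q i * q j * q l)) := by
          rw [← Finset.sum_add_distrib, ← Finset.sum_add_distrib]
          refine Finset.sum_congr rfl fun i _ => ?_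
          rw [← Finset.sum_add_distrib, ← Finset.sum_add_distrib]
          refine Finset.sum_congr rfl fun j _ => ?_
          rw [← Finset.sum_add_distrib, ← Finset.sum_add_distrib]
          refine Finset.sum_congr rfl fun l _ => ?_
          simp only [ha, add_smul]
      _ = 0 := by rw [e1, e2, e3]; ring
  have hz := aux_key3 q hdim a hs1 hs2 hsum3
  intro i j
  by_cases hj : j = i₀
  · subst hj
    by_cases hi : i = i₀
    · subst hi
      have := hz i₀ i₀ i₀
      simp only [ha, hd, if_pos rfl] at this
      norm_num at this
      linarith
    · have := hz i i₀ i₀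
      simp only [ha, hd, if_pos rfl, if_neg hi] at this
      norm_num at this
      linarith [this]
  · by_cases hi : i = i₀
    · subst hi
      have := hz j i₀ i₀
      simp only [ha, hd, if_pos rfl, if_neg hj] at this
      norm_num at this
      rw [hbs i₀ j]
      linarith [this]
    · have := hz i j i₀
      simp only [ha, hd, if_pos rfl, if_neg hi, if_neg hj] at this
      norm_num at this
      linarith [this]

open MvPolynomial

/-- `f` is a sum of squares of `k`-forms in `n` variables. -/
def IsSOSkForms (n k : ℕ) (f : MvPolynomial (Fin n) ℝ) : Prop :=
  ∃ (N : ℕ) (p : Fin N → MvPolynomial (Fin n) ℝ),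
    (∀ i, (p i).IsHomogeneous k) ∧ f = ∑ i, (p i) ^ 2

/-- The Sum-of-Squares support of `f`. -/
def sosupp (n k : ℕ) (f : MvPolynomial (Fin n) ℝ) : Set (MvPolynomial (Fin n) ℝ) :=
  {p | p.IsHomogeneous k ∧ ∃ lam : ℝ, 0 < lam ∧ IsSOSkForms n k (f - lam • p ^ 2)}

theorem stmt3 (n k m : ℕ) (q : Fin m → MvPolynomial (Fin n) ℝ) (lam : Fin m → ℝ)
    (hqk : ∀ i, (q i).IsHomogeneous k) (hqli : LinearIndependent ℝ q)
    (hlam : ∀ i, 0 < lam i)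
    (f2 f3 : MvPolynomial (Fin n) ℝ)
    (h2 : f2 = ∑ i, lam i • q i ^ 2) (h3 : f3 = ∑ i, lam i • q i ^ 3)
    (hdim : Module.finrank ℝ (Submodule.span ℝ
      {w : MvPolynomial (Fin n) ℝ | ∃ i j l : Fin m, w = q i * q j * q l})
        = Nat.choose (m + 2) 3)
    (hsupp : sosupp n k f2 = ↑(Submodule.span ℝ (Set.range q)))
    (m' : ℕ) (p : Fin m' → MvPolynomial (Fin n) ℝ) (mu : Fin m' → ℝ)
    (hpk : ∀ j, (p j).IsHomogeneous k) (hmu : ∀ j, 0 < mu j)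
    (h2' : f2 = ∑ j, mu j • p j ^ 2) (h3' : f3 = ∑ j, mu j • p j ^ 3) :
    m ≤ m' ∧ (m' = m →
      Multiset.map (fun j => (p j, mu j)) Finset.univ.val
        = Multiset.map (fun i => (q i, lam i)) Finset.univ.val) := by
  classical
  rcases Nat.eq_zero_or_pos m with hm0 | hm
  · subst hm0
    refine ⟨Nat.zero_le _, fun hm' => ?_⟩
    subst hm'
    simp
  -- Step 1: each p j lies in the span of the q i
  have hmem : ∀ j, p j ∈ Submodule.span ℝ (Set.range q) := by
    intro j
    have hin : p j ∈ sosupp n k f2 := by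
      refine ⟨hpk j, mu j, hmu j, m',
        fun j' => if j' = j then 0 else Real.sqrt (mu j') • p j', ?_, ?_⟩
      · intro j'
        by_cases h : j' = j
        · simp only [h, if_pos rfl]
          exact isHomogeneous_zero _ _ _
        · simp only [if_neg h]
          rw [MvPolynomial.smul_eq_C_mul]
          exact (hpk j').C_mul _
      · have hterm : ∀ j' : Fin m',
            (if j' = j then 0 else Real.sqrt (mu j') • p j') ^ 2
              = mu j' • p j' ^ 2 - (if j' = j then mu j' • p j' ^ 2 else 0) := by
          intro j'
          by_cases h : j' = j
          · simp [h]
          · simp only [if_neg h, smul_pow, sub_zero]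
            rw [Real.sq_sqrt (hmu j').le]
        rw [h2']
        rw [Finset.sum_congr rfl fun j' _ => hterm j', Finset.sum_sub_distrib,
          Fintype.sum_ite_eq' j fun j' => mu j' • p j' ^ 2]
    rw [hsupp] at hin
    exact hin
  choose c hc using fun j => (Submodule.mem_span_range_iff_exists_fun ℝ).mp (hmem j)
  -- Step 2: quadratic relations
  have hE1 : ∑ i, ∑ i', (∑ j, mu j * (c j i * c j i')) • (q i * q i') = f2 := by
    rw [h2']
    calc ∑ i, ∑ i', (∑ j, mu j * (c j i * c j i')) • (q i * q i')
        = ∑ i, ∑ i', ∑ j, (mu j * (c j i * c j i')) • (q i * q i') := by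
          refine Finset.sum_congr rfl fun i _ => Finset.sum_congr rfl fun i' _ => ?_
          rw [Finset.sum_smul]
      _ = ∑ i, ∑ j, ∑ i', (mu j * (c j i * c j i')) • (q i * q i') := by
          exact Finset.sum_congr rfl fun i _ => Finset.sum_comm
      _ = ∑ j, ∑ i, ∑ i', (mu j * (c j i * c j i')) • (q i * q i') := Finset.sum_comm
      _ = ∑ j, mu j • p j ^ 2 := by
          refine Finset.sum_congr rfl fun j _ => ?_
          rw [← hc j, aux_expand_sq, Finset.smul_sum]
          refine Finset.sum_congr rfl fun i _ => ?_
          rw [Finset.smul_sum]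
          exact Finset.sum_congr rfl fun i' _ => (smul_smul _ _ _).symm
  have hE2 : ∑ i, ∑ i' : Fin m, (if i = i' then lam i else 0) • (q i * q i') = f2 := by
    rw [h2]
    refine Finset.sum_congr rfl fun i _ => ?_
    calc ∑ i' : Fin m, (if i = i' then lam i else 0) • (q i * q i')
        = ∑ i' : Fin m, (if i = i' then lam i • (q i * q i') else 0) := by
          refine Finset.sum_congr rfl fun i' _ => ?_
          split_ifs <;> simp
      _ = lam i • (q i * q i) := Fintype.sum_ite_eq i fun i' => lam i • (q i * q i')
      _ = lam i • q i ^ 2 := by rw [pow_two]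
  have hB : ∀ i i' : Fin m,
      (∑ j, mu j * (c j i * c j i')) = (if i = i' then lam i else 0) := by
    have hb0 := aux_key2 hm q hdim
      (fun i i' => (∑ j, mu j * (c j i * c j i')) - (if i = i' then lam i else 0))
      (fun i i' => by
        have e1 : (∑ j, mu j * (c j i * c j i')) = ∑ j, mu j * (c j i' * c j i) := by
          exact Finset.sum_congr rfl fun j _ => by ring
        have e2 : (if i = i' then lam i else 0) = (if i' = i then lam i' else 0) := by
          by_cases hx : i = i'
          · rw [if_pos hx, if_pos hx.symm, hx]
          · rw [if_neg hx, if_neg fun hh => hx hh.symm]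
        show (∑ j, mu j * (c j i * c j i')) - (if i = i' then lam i else 0)
          = (∑ j, mu j * (c j i' * c j i)) - (if i' = i then lam i' else 0)
        rw [e1, e2])
      (by
        have : ∑ i, ∑ i', ((∑ j, mu j * (c j i * c j i'))
            - (if i = i' then lam i else 0)) • (q i * q i')
            = (∑ i, ∑ i', (∑ j, mu j * (c j i * c j i')) • (q i * q i'))
              - ∑ i, ∑ i' : Fin m, (if i = i' then lam i else 0) • (q i * q i') := by
          rw [← Finset.sum_sub_distrib]
          refine Finset.sum_congr rfl fun i _ => ?_
          rw [← Finset.sum_sub_distrib]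
          exact Finset.sum_congr rfl fun i' _ => sub_smul _ _ _
        rw [this, hE1, hE2, sub_self])
    intro i i'
    have := hb0 i i'
    exact sub_eq_zero.mp this
  -- Step 3: cubic relations
  have hF1 : ∑ i, ∑ i', ∑ i'', (∑ j, mu j * (c j i * c j i' * c j i''))
      • (q i * q i' * q i'') = f3 := by
    rw [h3']
    calc ∑ i, ∑ i', ∑ i'', (∑ j, mu j * (c j i * c j i' * c j i'')) • (q i * q i' * q i'')
        = ∑ i, ∑ i', ∑ i'', ∑ j, (mu j * (c j i * c j i' * c j i'')) • (q i * q i' * q i'') := by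
          refine Finset.sum_congr rfl fun i _ => Finset.sum_congr rfl fun i' _ =>
            Finset.sum_congr rfl fun i'' _ => ?_
          rw [Finset.sum_smul]
      _ = ∑ i, ∑ i', ∑ j, ∑ i'', (mu j * (c j i * c j i' * c j i'')) • (q i * q i' * q i'') :=
          Finset.sum_congr rfl fun i _ => Finset.sum_congr rfl fun i' _ => Finset.sum_comm
      _ = ∑ i, ∑ j, ∑ i', ∑ i'', (mu j * (c j i * c j i' * c j i'')) • (q i * q i' * q i'') :=
          Finset.sum_congr rfl fun i _ => Finset.sum_comm
      _ = ∑ j, ∑ i, ∑ i', ∑ i'', (mu j * (c j i * c j i' * c j i'')) • (q i * q i' * q i'') :=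
          Finset.sum_comm
      _ = ∑ j, mu j • p j ^ 3 := by
          refine Finset.sum_congr rfl fun j _ => ?_
          rw [← hc j, aux_expand_cube, Finset.smul_sum]
          refine Finset.sum_congr rfl fun i _ => ?_
          rw [Finset.smul_sum]
          refine Finset.sum_congr rfl fun i' _ => ?_
          rw [Finset.smul_sum]
          exact Finset.sum_congr rfl fun i'' _ => (smul_smul _ _ _).symm
  have hF2 : ∑ i, ∑ i', ∑ i'' : Fin m,
      (if i = i' ∧ i' = i'' then lam i else 0) • (q i * q i' * q i'') = f3 := by
    rw [h3]
    refine Finset.sum_congr rfl fun i _ => ?_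
    calc ∑ i', ∑ i'' : Fin m, (if i = i' ∧ i' = i'' then lam i else 0) • (q i * q i' * q i'')
        = ∑ i' : Fin m, (if i = i' then
            ∑ i'' : Fin m, (if i' = i'' then lam i • (q i * q i' * q i'') else 0) else 0) := by
          refine Finset.sum_congr rfl fun i' _ => ?_
          by_cases hx1 : i = i'
          · rw [if_pos hx1]
            refine Finset.sum_congr rfl fun i'' _ => ?_
            by_cases hx2 : i' = i''
            · rw [if_pos ⟨hx1, hx2⟩, if_pos hx2]
            · rw [if_neg (by tauto), if_neg hx2, zero_smul]
          · rw [if_neg hx1]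
            rw [show (0 : MvPolynomial (Fin n) ℝ)
              = ∑ _i'' : Fin m, 0 from (Finset.sum_const_zero).symm]
            refine Finset.sum_congr rfl fun i'' _ => ?_
            rw [if_neg (by tauto), zero_smul]
      _ = lam i • q i ^ 3 := by
          rw [Fintype.sum_ite_eq i fun i' =>
            ∑ i'' : Fin m, (if i' = i'' then lam i • (q i * q i' * q i'') else 0),
            Fintype.sum_ite_eq i fun i'' => lam i • (q i * q i * q i'')]
          rw [pow_succ, pow_two]
  have hA : ∀ i i' i'' : Fin m,
      (∑ j, mu j * (c j i * c j i' * c j i''))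
        = (if i = i' ∧ i' = i'' then lam i else 0) := by
    have ha0 := aux_key3 q hdim
      (fun i i' i'' => (∑ j, mu j * (c j i * c j i' * c j i''))
        - (if i = i' ∧ i' = i'' then lam i else 0))
      (fun i i' i'' => by
        have e1 : (∑ j, mu j * (c j i * c j i' * c j i''))
            = ∑ j, mu j * (c j i' * c j i * c j i'') :=
          Finset.sum_congr rfl fun j _ => by ring
        have e2 : (if i = i' ∧ i' = i'' then lam i else 0)
            = (if i' = i ∧ i = i'' then lam i' else 0) := by
          by_cases hx : i = i' ∧ i' = i''
          · rw [if_pos hx, if_pos ⟨hx.1.symm, hx.1.trans hx.2⟩, hx.1]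
          · rw [if_neg hx, if_neg fun hh => hx ⟨hh.1.symm, hh.1.trans hh.2⟩]
        show (∑ j, mu j * (c j i * c j i' * c j i''))
            - (if i = i' ∧ i' = i'' then lam i else 0)
          = (∑ j, mu j * (c j i' * c j i * c j i''))
            - (if i' = i ∧ i = i'' then lam i' else 0)
        rw [e1, e2])
      (fun i i' i'' => by
        have e1 : (∑ j, mu j * (c j i * c j i' * c j i''))
            = ∑ j, mu j * (c j i * c j i'' * c j i') :=
          Finset.sum_congr rfl fun j _ => by ring
        have e2 : (if i = i' ∧ i' = i'' then lam i else 0)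
            = (if i = i'' ∧ i'' = i' then lam i else 0) := by
          by_cases hx : i = i' ∧ i' = i''
          · rw [if_pos hx, if_pos ⟨hx.1.trans hx.2, hx.2.symm⟩]
          · rw [if_neg hx, if_neg fun hh => hx ⟨hh.1.trans hh.2, hh.2.symm⟩]
        show (∑ j, mu j * (c j i * c j i' * c j i''))
            - (if i = i' ∧ i' = i'' then lam i else 0)
          = (∑ j, mu j * (c j i * c j i'' * c j i'))
            - (if i = i'' ∧ i'' = i' then lam i else 0)
        rw [e1, e2])
      (by
        have : ∑ i, ∑ i', ∑ i'', ((∑ j, mu j * (c j i * c j i' * c j i''))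
            - (if i = i' ∧ i' = i'' then lam i else 0)) • (q i * q i' * q i'')
            = (∑ i, ∑ i', ∑ i'', (∑ j, mu j * (c j i * c j i' * c j i''))
                • (q i * q i' * q i''))
              - ∑ i, ∑ i', ∑ i'' : Fin m,
                (if i = i' ∧ i' = i'' then lam i else 0) • (q i * q i' * q i'') := by
          rw [← Finset.sum_sub_distrib]
          refine Finset.sum_congr rfl fun i _ => ?_
          rw [← Finset.sum_sub_distrib]
          refine Finset.sum_congr rfl fun i' _ => ?_
          rw [← Finset.sum_sub_distrib]
          exact Finset.sum_congr rfl fun i'' _ => sub_smul _ _ _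
        rw [this, hF1, hF2, sub_self])
    intro i i' i''
    exact sub_eq_zero.mp (ha0 i i' i'')
  -- Step 4: m ≤ m'
  have hLI : LinearIndependent ℝ (fun i (j : Fin m') => c j i) := by
    rw [Fintype.linearIndependent_iff]
    intro g hg i'
    have hgj : ∀ j, ∑ i, g i * c j i = 0 := by
      intro j
      have := congrFun hg j
      simpa [Finset.sum_apply] using this
    have h0 : ∑ j, mu j * c j i' * (∑ i, g i * c j i) = 0 := by
      simp [hgj]
    have hsw : ∑ j, mu j * c j i' * (∑ i, g i * c j i)
        = ∑ i, g i * (∑ j, mu j * (c j i * c j i')) := by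
      calc ∑ j, mu j * c j i' * (∑ i, g i * c j i)
          = ∑ j, ∑ i, g i * (mu j * (c j i * c j i')) := by
            refine Finset.sum_congr rfl fun j _ => ?_
            rw [Finset.mul_sum]
            exact Finset.sum_congr rfl fun i _ => by ring
        _ = ∑ i, ∑ j, g i * (mu j * (c j i * c j i')) := Finset.sum_comm
        _ = ∑ i, g i * (∑ j, mu j * (c j i * c j i')) :=
            Finset.sum_congr rfl fun i _ => (Finset.mul_sum _ _ _).symm
    rw [hsw] at h0
    rw [Finset.sum_congr rfl fun i _ => by rw [hB i i']] at h0
    rw [Finset.sum_congr rfl (fun i (_ : i ∈ Finset.univ) => show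
          g i * (if i = i' then lam i else 0) = if i = i' then g i * lam i else 0 from by
            split_ifs <;> simp),
      Fintype.sum_ite_eq' i' fun i => g i * lam i] at h0
    rcases mul_eq_zero.mp h0 with h | h
    · exact h
    · exact absurd h (hlam i').ne'
  have hmm' : m ≤ m' := by
    have := hLI.fintype_card_le_finrank
    simpa [Module.finrank_fintype_fun_eq_card] using this
  refine ⟨hmm', fun hm'm => ?_⟩
  subst m'
  -- the matrix B is orthogonal
  have hsl : ∀ i : Fin m, Real.sqrt (lam i) * Real.sqrt (lam i) = lam i :=
    fun i => Real.mul_self_sqrt (hlam i).le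
  have hslne : ∀ i, Real.sqrt (lam i) ≠ 0 :=
    fun i => ne_of_gt (Real.sqrt_pos.mpr (hlam i))
  have hsm : ∀ j, Real.sqrt (mu j) * Real.sqrt (mu j) = mu j :=
    fun j => Real.mul_self_sqrt (hmu j).le
  have hsmne : ∀ j, Real.sqrt (mu j) ≠ 0 :=
    fun j => ne_of_gt (Real.sqrt_pos.mpr (hmu j))
  set B : Matrix (Fin m) (Fin m) ℝ :=
    Matrix.of fun j i => Real.sqrt (mu j) * c j i / Real.sqrt (lam i) with hBdef
  have hBtB : B.transpose * B = 1 := by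
    ext i i'
    rw [Matrix.mul_apply, Matrix.one_apply]
    calc ∑ j, B.transpose i j * B j i'
        = ∑ j, (mu j * (c j i * c j i')) / (Real.sqrt (lam i) * Real.sqrt (lam i')) := by
          refine Finset.sum_congr rfl fun j _ => ?_
          show (Real.sqrt (mu j) * c j i / Real.sqrt (lam i))
              * (Real.sqrt (mu j) * c j i' / Real.sqrt (lam i')) = _
          rw [div_mul_div_comm,
            show Real.sqrt (mu j) * c j i * (Real.sqrt (mu j) * c j i')
              = (Real.sqrt (mu j) * Real.sqrt (mu j)) * (c j i * c j i') from by ring,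
            hsm j]
      _ = (∑ j, mu j * (c j i * c j i')) / (Real.sqrt (lam i) * Real.sqrt (lam i')) :=
          (Finset.sum_div _ _ _).symm
      _ = (if i = i' then lam i else 0) / (Real.sqrt (lam i) * Real.sqrt (lam i')) := by
          rw [hB]
      _ = (if i = i' then 1 else 0) := by
          by_cases hx : i = i'
          · rw [if_pos hx, if_pos hx, ← hx, hsl, div_self (hlam i).ne']
          · rw [if_neg hx, if_neg hx, zero_div]
  have hBBt : B * B.transpose = 1 := mul_eq_one_comm.mp hBtB
  have hR : ∀ j j', (∑ i, c j i * c j' i / lam i) = (if j = j' then (mu j)⁻¹ else 0) := by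
    intro j j'
    have hent : (B * B.transpose) j j' = (1 : Matrix (Fin m) (Fin m) ℝ) j j' := by rw [hBBt]
    rw [Matrix.mul_apply, Matrix.one_apply] at hent
    have hsum : ∑ i, B j i * B.transpose i j'
        = (∑ i, c j i * c j' i / lam i) * (Real.sqrt (mu j) * Real.sqrt (mu j')) := by
      rw [Finset.sum_mul]
      refine Finset.sum_congr rfl fun i _ => ?_
      show (Real.sqrt (mu j) * c j i / Real.sqrt (lam i))
          * (Real.sqrt (mu j') * c j' i / Real.sqrt (lam i)) = _
      rw [div_mul_div_comm, hsl]
      ring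
    rw [hsum] at hent
    by_cases hx : j = j'
    · rw [if_pos hx] at hent
      rw [if_pos hx]
      subst hx
      rw [hsm j] at hent
      exact eq_inv_of_mul_eq_one_left hent
    · rw [if_neg hx] at hent
      rw [if_neg hx]
      exact (mul_eq_zero.mp hent).resolve_right
        (mul_ne_zero (hsmne j) (hsmne j'))
  -- orthogonality of the rows of c in each column
  have hOrth : ∀ j j', j ≠ j' → ∀ i, c j i * c j' i = 0 := by
    intro j j' hne i
    have hS1 : ∑ i', ∑ i'', (c j i' / lam i') * (c j' i'' / lam i'')
        * (∑ j'', mu j'' * (c j'' i * c j'' i' * c j'' i''))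
        = (c j i / lam i) * (c j' i / lam i) * lam i := by
      calc ∑ i', ∑ i'', (c j i' / lam i') * (c j' i'' / lam i'')
            * (∑ j'', mu j'' * (c j'' i * c j'' i' * c j'' i''))
          = ∑ i' : Fin m, (if i = i' then ∑ i'' : Fin m, (if i' = i'' then
              (c j i' / lam i') * (c j' i'' / lam i'') * lam i else 0) else 0) := by
            refine Finset.sum_congr rfl fun i' _ => ?_
            by_cases hx1 : i = i'
            · rw [if_pos hx1]
              refine Finset.sum_congr rfl fun i'' _ => ?_
              rw [hA i i' i'']
              by_cases hx2 : i' = i''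
              · rw [if_pos ⟨hx1, hx2⟩, if_pos hx2]
              · rw [if_neg (by tauto), if_neg hx2, mul_zero]
            · rw [if_neg hx1]
              rw [show (0 : ℝ) = ∑ _i'' : Fin m, 0 from Finset.sum_const_zero.symm]
              refine Finset.sum_congr rfl fun i'' _ => ?_
              rw [hA i i' i'', if_neg (by tauto), mul_zero]
        _ = (c j i / lam i) * (c j' i / lam i) * lam i := by
            rw [Fintype.sum_ite_eq i fun i' => ∑ i'' : Fin m, (if i' = i'' then
              (c j i' / lam i') * (c j' i'' / lam i'') * lam i else 0),
              Fintype.sum_ite_eq i fun i'' =>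
                (c j i / lam i) * (c j' i'' / lam i'') * lam i]
    have hS2 : ∑ i', ∑ i'', (c j i' / lam i') * (c j' i'' / lam i'')
        * (∑ j'', mu j'' * (c j'' i * c j'' i' * c j'' i'')) = 0 := by
      calc ∑ i', ∑ i'', (c j i' / lam i') * (c j' i'' / lam i'')
            * (∑ j'', mu j'' * (c j'' i * c j'' i' * c j'' i''))
          = ∑ i', ∑ i'', ∑ j'', mu j'' * c j'' i
              * (c j i' * c j'' i' / lam i') * (c j' i'' * c j'' i'' / lam i'') := by
            refine Finset.sum_congr rfl fun i' _ => Finset.sum_congr rfl fun i'' _ => ?_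
            rw [Finset.mul_sum]
            exact Finset.sum_congr rfl fun j'' _ => by ring
        _ = ∑ i', ∑ j'', ∑ i'', mu j'' * c j'' i
              * (c j i' * c j'' i' / lam i') * (c j' i'' * c j'' i'' / lam i'') :=
            Finset.sum_congr rfl fun i' _ => Finset.sum_comm
        _ = ∑ j'', ∑ i', ∑ i'', mu j'' * c j'' i
              * (c j i' * c j'' i' / lam i') * (c j' i'' * c j'' i'' / lam i'') :=
            Finset.sum_comm
        _ = ∑ j'', mu j'' * c j'' i * (∑ i', c j i' * c j'' i' / lam i')
              * (∑ i'', c j' i'' * c j'' i'' / lam i'') := by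
            refine Finset.sum_congr rfl fun j'' _ => ?_
            rw [mul_assoc, Finset.sum_mul_sum, Finset.mul_sum]
            refine Finset.sum_congr rfl fun i' _ => ?_
            rw [Finset.mul_sum]
            exact Finset.sum_congr rfl fun i'' _ => by ring
        _ = 0 := by
            refine Finset.sum_eq_zero fun j'' _ => ?_
            rw [hR j j'', hR j' j'']
            by_cases hx : j' = j''
            · rw [if_neg (fun hh : j = j'' => hne (hh.trans hx.symm)), mul_zero, zero_mul]
            · rw [if_neg hx, mul_zero]
    have h0 : (c j i / lam i) * (c j' i / lam i) * lam i = 0 := by rw [← hS1, hS2]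
    have hl := (hlam i).ne'
    have hgoal : c j i * c j' i
        = (c j i / lam i * (c j' i / lam i) * lam i) * lam i := by
      field_simp
    rw [h0, zero_mul] at hgoal
    exact hgoal
  -- the permutation σ
  have hex : ∀ i, ∃ j, c j i ≠ 0 := by
    intro i
    by_contra hcon
    push_neg at hcon
    have hBi := hB i i
    rw [if_pos rfl, Finset.sum_eq_zero (fun j _ => by rw [hcon j]; ring)] at hBi
    exact (hlam i).ne' hBi.symm
  choose σ hσ using hex
  have huniq : ∀ i j, c j i ≠ 0 → j = σ i := by
    intro i j hj
    by_contra hne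
    exact hj ((mul_eq_zero.mp (hOrth j (σ i) hne i)).resolve_right (hσ i))
  have hzero : ∀ i j, j ≠ σ i → c j i = 0 := by
    intro i j hne
    by_contra hc0
    exact hne (huniq i j hc0)
  have hsingleB : ∀ i i', ∑ j, mu j * (c j i * c j i')
      = mu (σ i) * (c (σ i) i * c (σ i) i') := by
    intro i i'
    refine Finset.sum_eq_single (σ i) (fun j _ hjne => ?_) (by simp)
    rw [hzero i j hjne, zero_mul, mul_zero]
  have hinj : Function.Injective σ := by
    intro i i' hii'
    by_contra hne
    have h0 := hB i i'
    rw [if_neg hne, hsingleB i i'] at h0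
    have h1 := (mul_eq_zero.mp h0.symm.symm)
    rcases (mul_eq_zero.mp h0) with h | h
    · exact (hmu (σ i)).ne' h
    · rcases mul_eq_zero.mp h with h' | h'
      · exact hσ i h'
      · rw [hii'] at h'
        exact hσ i' h'
  have hbij : Function.Bijective σ := (Finite.injective_iff_bijective).mp hinj
  -- values
  have hBii : ∀ i, mu (σ i) * (c (σ i) i * c (σ i) i) = lam i := by
    intro i
    have := hB i i
    rw [if_pos rfl, hsingleB i i] at this
    exact this
  have hAiii : ∀ i, mu (σ i) * (c (σ i) i * c (σ i) i * c (σ i) i) = lam i := by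
    intro i
    have h0 := hA i i i
    rw [if_pos ⟨rfl, rfl⟩] at h0
    rw [Finset.sum_eq_single (σ i) (fun j _ hjne => by
      rw [hzero i j hjne, zero_mul, zero_mul, mul_zero]) (by simp)] at h0
    exact h0
  have hci1 : ∀ i, c (σ i) i = 1 := by
    intro i
    have h1 := hBii i
    have h2 := hAiii i
    have h3 : lam i * c (σ i) i = lam i :=
      calc lam i * c (σ i) i
          = mu (σ i) * (c (σ i) i * c (σ i) i) * c (σ i) i := by rw [h1]
        _ = mu (σ i) * (c (σ i) i * c (σ i) i * c (σ i) i) := by ring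
        _ = lam i := h2
    exact mul_left_cancel₀ (hlam i).ne' (h3.trans (mul_one (lam i)).symm)
  have hmu_eq : ∀ i, mu (σ i) = lam i := by
    intro i
    have h1 := hBii i
    rw [hci1 i] at h1
    simpa using h1
  have hp_eq : ∀ i, p (σ i) = q i := by
    intro i
    rw [← hc (σ i)]
    rw [Finset.sum_eq_single i (fun i' _ hne => by
      rw [hzero i' (σ i) (fun hh => hne (hinj hh).symm), zero_smul])
      (fun hni => absurd (Finset.mem_univ i) hni)]
    rw [hci1 i, one_smul]
  -- conclude the multiset equality
  have e : Fin m ≃ Fin m := Equiv.ofBijective σ hbij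
  have hmapuniv : Multiset.map σ Finset.univ.val = Finset.univ.val := by
    have h1 := congrArg Finset.val (Finset.map_univ_equiv (Equiv.ofBijective σ hbij))
    rw [Finset.map_val] at h1
    exact h1
  calc Multiset.map (fun j => (p j, mu j)) Finset.univ.val
      = Multiset.map (fun j => (p j, mu j)) (Multiset.map σ Finset.univ.val) := by
        rw [hmapuniv]
    _ = Multiset.map ((fun j => (p j, mu j)) ∘ σ) Finset.univ.val :=
        (Multiset.map_map _ _ _)
    _ = Multiset.map (fun i => (q i, lam i)) Finset.univ.val := by
        refine Multiset.map_congr rfl fun i _ => ?_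
        show (p (σ i), mu (σ i)) = (q i, lam i)
        rw [hp_eq, hmu_eq]
end

section
/- Let n, k ∈ ℕ, let f ∈ ℝ[X]_{2k}, and let E : ℝ[X]_{2k} → ℝ be a linear functional such that E(h²) ≥ 0 for all h ∈ ℝ[X]_k and E(f) = 0. Then for every p ∈ sosupp f and every h ∈ ℝ[X]_k, E(p·h) = 0. -/
open MvPolynomial

theorem stmt7 (n k : ℕ) (f : MvPolynomial (Fin n) ℝ) (hf : f.IsHomogeneous (2 * k))
    (E : homogeneousSubmodule (Fin n) ℝ (2 * k) →ₗ[ℝ] ℝ)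
    (hEpos : ∀ h : MvPolynomial (Fin n) ℝ, h.IsHomogeneous k →
      ∀ x : homogeneousSubmodule (Fin n) ℝ (2 * k),
        (x : MvPolynomial (Fin n) ℝ) = h ^ 2 → 0 ≤ E x)
    (hEf : ∀ x : homogeneousSubmodule (Fin n) ℝ (2 * k),
      (x : MvPolynomial (Fin n) ℝ) = f → E x = 0) :
    ∀ p ∈ sosupp n k f, ∀ h : MvPolynomial (Fin n) ℝ, h.IsHomogeneous k →
      ∀ x : homogeneousSubmodule (Fin n) ℝ (2 * k),
        (x : MvPolynomial (Fin n) ℝ) = p * h → E x = 0 := by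
  rintro p ⟨hp, lam, hlam, N, q, hq, hsum⟩ h hh x hx
  have sqmem : ∀ g : MvPolynomial (Fin n) ℝ, g.IsHomogeneous k →
      (g ^ 2).IsHomogeneous (2 * k) := fun g hg => by
    simpa [mul_comm] using hg.pow 2
  have mulmem : (p * h).IsHomogeneous (2 * k) := by
    simpa [two_mul] using hp.mul hh
  let F : homogeneousSubmodule (Fin n) ℝ (2 * k) :=
    ⟨f, (mem_homogeneousSubmodule _ _).2 hf⟩
  let Pp : homogeneousSubmodule (Fin n) ℝ (2 * k) :=
    ⟨p ^ 2, (mem_homogeneousSubmodule _ _).2 (sqmem p hp)⟩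
  let PH : homogeneousSubmodule (Fin n) ℝ (2 * k) :=
    ⟨p * h, (mem_homogeneousSubmodule _ _).2 mulmem⟩
  let H2 : homogeneousSubmodule (Fin n) ℝ (2 * k) :=
    ⟨h ^ 2, (mem_homogeneousSubmodule _ _).2 (sqmem h hh)⟩
  let Q : Fin N → homogeneousSubmodule (Fin n) ℝ (2 * k) := fun i =>
    ⟨q i ^ 2, (mem_homogeneousSubmodule _ _).2 (sqmem _ (hq i))⟩
  have hEPp : 0 ≤ E Pp := hEpos p hp Pp rfl
  have hEH2 : 0 ≤ E H2 := hEpos h hh H2 rfl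
  have hEQ : ∀ i, 0 ≤ E (Q i) := fun i => hEpos (q i) (hq i) (Q i) rfl
  have hFdec : F = lam • Pp + ∑ i, Q i := by
    apply Subtype.ext
    push_cast [F, Pp, Q]
    linear_combination hsum
  have hEF : E F = 0 := hEf F rfl
  have hEPp0 : E Pp = 0 := by
    have h1 : lam * E Pp + ∑ i, E (Q i) = 0 := by
      rw [← hEF, hFdec]
      simp [map_sum]
    have h2 : 0 ≤ ∑ i, E (Q i) := Finset.sum_nonneg fun i _ => hEQ i
    nlinarith [hEPp, hlam]
  have key : ∀ t : ℝ, 0 ≤ 2 * t * E PH + t ^ 2 * E H2 := by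
    intro t
    have hth : (p + t • h).IsHomogeneous k := by
      refine hp.add ?_
      rw [smul_eq_C_mul]
      simpa using (isHomogeneous_C (Fin n) t).mul hh
    let Pt : homogeneousSubmodule (Fin n) ℝ (2 * k) :=
      ⟨(p + t • h) ^ 2, (mem_homogeneousSubmodule _ _).2 (sqmem _ hth)⟩
    have hdec : Pt = Pp + (2 * t) • PH + (t ^ 2) • H2 := by
      apply Subtype.ext
      push_cast [Pt, Pp, PH, H2]
      simp only [smul_eq_C_mul, map_mul, map_pow, map_ofNat]
      ring
    have h0 : 0 ≤ E Pt := hEpos _ hth Pt rfl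
    rw [hdec] at h0
    simp only [map_add, map_smul, smul_eq_mul, hEPp0] at h0
    linarith
  have hxPH : x = PH := Subtype.ext (by rw [hx])
  rw [hxPH]
  rcases eq_or_lt_of_le hEH2 with hB0 | hBpos
  · have k1 := key 1
    have k2 := key (-1)
    nlinarith
  · set A := E PH with hA
    set B := E H2 with hB
    clear_value A B
    clear hA hB hEPp hEQ hFdec hEF hEPp0 hxPH hEf hEpos hsum
    have hBne : B ≠ 0 := ne_of_gt hBpos
    have hs : A = (A / B) * B := by field_simp
    have hk := key (-(A / B))
    set s := A / B with hsdef
    clear_value s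
    rw [hs] at hk
    have h1 : 0 ≤ -(s ^ 2) * B := by nlinarith [hk]
    have h2 : s ^ 2 ≤ 0 := by
      by_contra hc
      push_neg at hc
      nlinarith
    have h3 : s = 0 := by
      have := sq_nonneg s
      have : s ^ 2 = 0 := le_antisymm h2 (sq_nonneg s)
      exact pow_eq_zero_iff (by norm_num) |>.1 this
    rw [hs, h3, zero_mul]
end

section
/- Let n, k ∈ ℕ, let f ∈ ℝ[X]_{2k} be a sum of squares of k-forms, let I be the ideal of ℝ[X₁,…,Xₙ] generated by sosupp f, and let I_{2k} = I ∩ ℝ[X]_{2k}. Let C be the image of the set of sums of squares of elements of ℝ[X]_k under the quotient map ℝ[X]_{2k} → ℝ[X]_{2k}/I_{2k} (the quotient carrying its canonical topology as a finite-dimensional real vector space). If C is closed and C ∩ (−C) = {0}, then the linear span of C_f equals {L : ℝ[X]_{2k} → ℝ linear : L vanishes on I_{2k}}. -/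
open MvPolynomial

/-- `C_f`: the set of linear functionals `E` on `ℝ[X]_{2k}` with `E(h²) ≥ 0` for all
`k`-forms `h` and `E(f) = 0`. -/
def Cf (n k : ℕ) (f : MvPolynomial (Fin n) ℝ) :
    Set (homogeneousSubmodule (Fin n) ℝ (2 * k) →ₗ[ℝ] ℝ) :=
  {E | (∀ h : MvPolynomial (Fin n) ℝ, h.IsHomogeneous k →
          ∀ x : homogeneousSubmodule (Fin n) ℝ (2 * k),
            (x : MvPolynomial (Fin n) ℝ) = h ^ 2 → 0 ≤ E x) ∧
       ∀ x : homogeneousSubmodule (Fin n) ℝ (2 * k),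
         (x : MvPolynomial (Fin n) ℝ) = f → E x = 0}

/-- The submodule `I_{2k} = I ∩ ℝ[X]_{2k}` of the space `ℝ[X]_{2k}` of `2k`-forms. -/
noncomputable def idealPart (n k : ℕ) (I : Ideal (MvPolynomial (Fin n) ℝ)) :
    Submodule ℝ (homogeneousSubmodule (Fin n) ℝ (2 * k)) :=
  Submodule.comap (homogeneousSubmodule (Fin n) ℝ (2 * k)).subtype (I.restrictScalars ℝ)

/-- The image, in the quotient `ℝ[X]_{2k} / I_{2k}`, of the set of sums of squares
of `k`-forms. -/
noncomputable def sosImage (n k : ℕ) (I : Ideal (MvPolynomial (Fin n) ℝ)) :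
    Set (homogeneousSubmodule (Fin n) ℝ (2 * k) ⧸ idealPart n k I) :=
  (idealPart n k I).mkQ ''
    {x | ∃ (N : ℕ) (p : Fin N → MvPolynomial (Fin n) ℝ),
      (∀ i, (p i).IsHomogeneous k) ∧ (x : MvPolynomial (Fin n) ℝ) = ∑ i, p i ^ 2}


/-! Every `E ∈ C_f` is nonnegative on sums of squares and kills `f`, so it kills `p²` for
every `p ∈ sosupp f`; since `t ↦ E((q + t p)²)` is then affine and nonnegative, `E` also kills
every product `q p` with `q` a `k`-form, and these span `I_{2k}`. Conversely, a functional
vanishing on `I_{2k}` is a functional on `ℝ[X]_{2k} / I_{2k}`. There the cone `C` is closed and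
pointed, so by Farkas' lemma a vector on which all of its dual cone vanishes lies in
`C ∩ -C = {0}`, i.e. the dual cone spans the whole dual space; and elements of the dual cone
pull back to elements of `C_f` because `f ∈ I`. -/

open Module Topology

namespace MvPolynomial

variable {σ R : Type*} [CommSemiring R]

instance [Finite σ] (d : ℕ) : Module.Finite R (homogeneousSubmodule σ R d) :=
  Module.Finite.iff_fg.2 (homogeneousSubmodule_fg σ R d)

variable (σ R) in
noncomputable def homogeneousProj (d : ℕ) : MvPolynomial σ R →ₗ[R] homogeneousSubmodule σ R d :=
  (homogeneousComponent d).codRestrict _ fun _ => homogeneousComponent_mem d _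

@[simp]
lemma coe_homogeneousProj (d : ℕ) (p : MvPolynomial σ R) :
    (homogeneousProj σ R d p : MvPolynomial σ R) = homogeneousComponent d p :=
  rfl

@[simp]
lemma homogeneousProj_coe {d : ℕ} (x : homogeneousSubmodule σ R d) :
    homogeneousProj σ R d x = x :=
  Subtype.ext (homogeneousComponent_eq_self x.2)

lemma IsHomogeneous.sq {p : MvPolynomial σ R} {m : ℕ} (hp : p.IsHomogeneous m) :
    (p ^ 2).IsHomogeneous (2 * m) := by
  simpa [mul_comm] using hp.pow 2

lemma IsHomogeneous.homogeneousComponent_add_mul {p : MvPolynomial σ R} {d : ℕ}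
    (hp : p.IsHomogeneous d) (m : ℕ) (g : MvPolynomial σ R) :
    homogeneousComponent (m + d) (g * p) = homogeneousComponent m g * p := by
  induction g using MvPolynomial.induction_on' with
  | monomial u a =>
      have hu : (monomial u a).IsHomogeneous u.degree := isHomogeneous_monomial a rfl
      rw [homogeneousComponent_of_mem (hu.mul hp), homogeneousComponent_of_mem hu]
      by_cases h : m = u.degree <;> simp [h]
  | add q r hq hr => rw [add_mul, map_add, map_add, add_mul, hq, hr]

lemma exists_eq_sum_mul_of_mem_span {S : Set (MvPolynomial σ R)} {d m : ℕ}
    (hS : ∀ s ∈ S, s.IsHomogeneous d) {x : MvPolynomial σ R} (hx : x ∈ Ideal.span S)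
    (hxd : x.IsHomogeneous (m + d)) :
    ∃ (N : ℕ) (q : Fin N → MvPolynomial σ R) (s : Fin N → S),
      (∀ i, (q i).IsHomogeneous m) ∧ x = ∑ i, q i * s i := by
  obtain ⟨N, c, s, rfl⟩ := Submodule.mem_span_set'.1 hx
  refine ⟨N, fun i => homogeneousComponent m (c i), s,
    fun i => homogeneousComponent_isHomogeneous m _, ?_⟩
  rw [← homogeneousComponent_eq_self hxd, map_sum]
  exact Finset.sum_congr rfl fun i _ => (hS _ (s i).2).homogeneousComponent_add_mul m (c i)

end MvPolynomial

lemma LinearMap.apply_mul_eq_zero_of_apply_sq_eq_zero {A : Type*} [CommSemiring A]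
    [Algebra ℝ A] {M : Submodule ℝ A} {ℓ : A →ₗ[ℝ] ℝ} (hℓ : ∀ h ∈ M, 0 ≤ ℓ (h ^ 2))
    {p q : A} (hp : p ∈ M) (hq : q ∈ M) (hp0 : ℓ (p ^ 2) = 0) : ℓ (q * p) = 0 := by
  have hlin : ∀ t : ℝ, 0 ≤ ℓ (q ^ 2) + t * ℓ (2 * q * p) := fun t => by
    have h := hℓ (q + t • p) (M.add_mem hq (M.smul_mem t hp))
    rwa [add_sq, mul_smul_comm, smul_pow, map_add, map_add, map_smul, map_smul, hp0,
      smul_eq_mul, smul_eq_mul, mul_zero, add_zero] at h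
  have h2 : ℓ (2 * q * p) = 0 := by
    by_contra hne
    have := hlin (-(ℓ (q ^ 2) + 1) / ℓ (2 * q * p))
    rw [div_mul_cancel₀ _ hne] at this
    linarith
  rwa [mul_assoc, two_mul, map_add, ← two_mul, mul_eq_zero, or_iff_right two_ne_zero] at h2

namespace PointedCone

variable {E : Type*} [AddCommGroup E] [Module ℝ E] [FiniteDimensional ℝ E]
  {C : PointedCone ℝ E}

theorem mem_of_forall_mem_dual_nonneg (hC : IsClosed[moduleTopology ℝ E] (C : Set E)) {z : E}
    (hz : ∀ φ ∈ dual (Dual.eval ℝ E) C, 0 ≤ φ z) : z ∈ C := by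
  let := moduleTopology ℝ E
  have : IsModuleTopology ℝ E := ⟨rfl⟩
  have := IsModuleTopology.toContinuousAdd ℝ E
  -- Separate in coordinates, where the space is normed and Hahn–Banach applies.
  let g := (finBasis ℝ E).equivFun
  let K : ProperCone ℝ (Fin (finrank ℝ E) → ℝ) :=
    ⟨C.comap g.symm.toLinearMap,
      hC.preimage (IsModuleTopology.continuous_of_linearMap (R := ℝ) _)⟩
  by_contra hzC
  obtain ⟨ψ, hψK, hψz⟩ := K.hyperplane_separation_point (x₀ := g z)
    fun h => hzC (by simpa using mem_comap.1 h)
  have hψg : ψ.toLinearMap ∘ₗ g.toLinearMap ∈ dual (Dual.eval ℝ E) C :=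
    fun x hx => hψK (g x) (show g.symm (g x) ∈ C by simpa using hx)
  exact (hz _ hψg).not_gt hψz

theorem span_dual_eq_top (hC : IsClosed[moduleTopology ℝ E] (C : Set E))
    (hsalient : (C ∩ -C : Set E) = {0}) :
    Submodule.span ℝ (dual (Dual.eval ℝ E) C : Set (Dual ℝ E)) = ⊤ := by
  have hbot :
      (Submodule.span ℝ (dual (Dual.eval ℝ E) C : Set (Dual ℝ E))).dualCoannihilator = ⊥ := by
    refine (Submodule.eq_bot_iff _).2 fun z hz => ?_
    have hz0 : ∀ φ ∈ dual (Dual.eval ℝ E) C, φ z = 0 := fun φ hφ =>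
      (Submodule.mem_dualCoannihilator z).1 hz φ (Submodule.subset_span hφ)
    have hzC : z ∈ C := mem_of_forall_mem_dual_nonneg hC fun φ hφ => (hz0 φ hφ).ge
    have hnzC : -z ∈ C := mem_of_forall_mem_dual_nonneg hC fun φ hφ => by simp [hz0 φ hφ]
    exact hsalient.subset ⟨hzC, hnzC⟩
  rw [← Subspace.dualCoannihilator_dualAnnihilator_eq (W := Submodule.span ℝ _), hbot,
    Submodule.dualAnnihilator_bot]

end PointedCone

variable {n k : ℕ} {f : MvPolynomial (Fin n) ℝ}

def sosCone (n k : ℕ) : PointedCone ℝ (homogeneousSubmodule (Fin n) ℝ (2 * k)) where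
  carrier := {x | IsSOSkForms n k x}
  zero_mem' := ⟨0, Fin.elim0, Fin.rec0, by simp⟩
  add_mem' := by
    rintro x y ⟨N, p, hp, hx⟩ ⟨M, q, hq, hy⟩
    refine ⟨N + M, Fin.append p q, Fin.addCases (by simpa) (by simpa), ?_⟩
    simp [hx, hy, Fin.sum_univ_add]
  smul_mem' := by
    rintro c x ⟨N, p, hp, hx⟩
    refine ⟨N, fun i => √c • p i, fun i => (homogeneousSubmodule _ ℝ k).smul_mem _ (hp i), ?_⟩
    simp [hx, Finset.smul_sum, smul_pow, Real.sq_sqrt c.2]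

lemma mem_sosupp_of_eq_sum_sq {N : ℕ} {p : Fin N → MvPolynomial (Fin n) ℝ}
    (hp : ∀ i, (p i).IsHomogeneous k) (hf : f = ∑ i, p i ^ 2) (i : Fin N) :
    p i ∈ sosupp n k f := by
  classical
  refine ⟨hp i, 1, one_pos, N, Function.update p i 0, fun j => ?_, ?_⟩
  · rcases eq_or_ne j i with rfl | hj
    · simpa using isHomogeneous_zero _ _ _
    · simpa [hj] using hp j
  · have hupd : (fun j => Function.update p i 0 j ^ 2) =
        Function.update (fun j => p j ^ 2) i 0 := by
      funext j
      rcases eq_or_ne j i with rfl | hj <;> simp [*]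
    rw [hupd, Finset.sum_update_of_mem (Finset.mem_univ i), hf, one_smul,
      Finset.sum_eq_add_sum_sdiff_singleton_of_mem (Finset.mem_univ i), add_sub_cancel_left,
      zero_add]

lemma IsSOSkForms.mem_span_sosupp (hf : IsSOSkForms n k f) :
    f ∈ Ideal.span (sosupp n k f) := by
  obtain ⟨N, p, hp, hfp⟩ := hf
  have : ∑ i, p i ^ 2 ∈ Ideal.span (sosupp n k f) := Ideal.sum_mem _ fun i _ =>
    Ideal.pow_mem_of_mem _ (Ideal.subset_span (mem_sosupp_of_eq_sum_sq hp hfp i)) 2 two_pos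
  rwa [← hfp] at this

namespace Cf

variable {E : homogeneousSubmodule (Fin n) ℝ (2 * k) →ₗ[ℝ] ℝ}

lemma apply_sq_nonneg (hE : E ∈ Cf n k f) {h : MvPolynomial (Fin n) ℝ}
    (hh : h.IsHomogeneous k) : 0 ≤ E (homogeneousProj _ ℝ (2 * k) (h ^ 2)) :=
  hE.1 h hh _ (homogeneousComponent_eq_self hh.sq)

lemma apply_nonneg_of_isSOSkForms (hE : E ∈ Cf n k f) {g : MvPolynomial (Fin n) ℝ}
    (hg : IsSOSkForms n k g) : 0 ≤ E (homogeneousProj _ ℝ (2 * k) g) := by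
  obtain ⟨N, p, hp, rfl⟩ := hg
  rw [map_sum, map_sum]
  exact Finset.sum_nonneg fun i _ => apply_sq_nonneg hE (hp i)

lemma apply_sq_eq_zero_of_mem_sosupp (hE : E ∈ Cf n k f) (hf : f.IsHomogeneous (2 * k))
    {p : MvPolynomial (Fin n) ℝ} (hp : p ∈ sosupp n k f) :
    E (homogeneousProj _ ℝ (2 * k) (p ^ 2)) = 0 := by
  obtain ⟨hpk, lam, hlam, hsos⟩ := hp
  have hEf : E (homogeneousProj _ ℝ (2 * k) f) = 0 := hE.2 _ (homogeneousComponent_eq_self hf)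
  have hdiff := apply_nonneg_of_isSOSkForms hE hsos
  rw [map_sub, map_sub, map_smul, map_smul, hEf, smul_eq_mul] at hdiff
  nlinarith [apply_sq_nonneg hE hpk]

lemma apply_eq_zero_of_mem_idealPart (hE : E ∈ Cf n k f) (hf : f.IsHomogeneous (2 * k))
    {x : homogeneousSubmodule (Fin n) ℝ (2 * k)}
    (hx : x ∈ idealPart n k (Ideal.span (sosupp n k f))) : E x = 0 := by
  obtain ⟨N, q, s, hq, hxs⟩ := exists_eq_sum_mul_of_mem_span (x := (x : MvPolynomial (Fin n) ℝ))
    (m := k) (fun p hp => hp.1) hx (by rw [← two_mul]; exact x.2)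
  rw [← homogeneousProj_coe x, hxs, map_sum, map_sum]
  exact Finset.sum_eq_zero fun i _ =>
    LinearMap.apply_mul_eq_zero_of_apply_sq_eq_zero (M := homogeneousSubmodule _ ℝ k)
      (ℓ := E ∘ₗ homogeneousProj _ ℝ (2 * k)) (fun h hh => apply_sq_nonneg hE hh) (s i).2.1
      (hq i) (apply_sq_eq_zero_of_mem_sosupp hE hf (s i).2)

end Cf

lemma dualMap_mkQ_mem_Cf {I : Ideal (MvPolynomial (Fin n) ℝ)} (hfI : f ∈ I)
    {φ : Dual ℝ (homogeneousSubmodule (Fin n) ℝ (2 * k) ⧸ idealPart n k I)}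
    (hφ : φ ∈ PointedCone.dual (Dual.eval ℝ _) ((sosCone n k).map (idealPart n k I).mkQ)) :
    (idealPart n k I).mkQ.dualMap φ ∈ Cf n k f := by
  refine ⟨fun h hh x hx => hφ ⟨x, ⟨1, fun _ => h, fun _ => hh, by simp [hx]⟩, rfl⟩,
    fun x hx => ?_⟩
  have hxI : x ∈ idealPart n k I := show (x : MvPolynomial (Fin n) ℝ) ∈ I from hx ▸ hfI
  simp [(Submodule.Quotient.mk_eq_zero _).2 hxI]

theorem stmt9 (n k : ℕ) (f : MvPolynomial (Fin n) ℝ) (hf : f.IsHomogeneous (2 * k))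
    (hsos : IsSOSkForms n k f)
    (hclosed : @IsClosed _ (moduleTopology ℝ _)
      (sosImage n k (Ideal.span (sosupp n k f))))
    (hpointed : sosImage n k (Ideal.span (sosupp n k f)) ∩
        (-(sosImage n k (Ideal.span (sosupp n k f)))) = {0}) :
    (Submodule.span ℝ (Cf n k f) : Set (homogeneousSubmodule (Fin n) ℝ (2 * k) →ₗ[ℝ] ℝ)) =
      {L | ∀ x : homogeneousSubmodule (Fin n) ℝ (2 * k),
        (x : MvPolynomial (Fin n) ℝ) ∈ Ideal.span (sosupp n k f) → L x = 0} := by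
  set W := idealPart n k (Ideal.span (sosupp n k f))
  suffices Submodule.span ℝ (Cf n k f) = W.dualAnnihilator by
    ext L
    rw [this]
    exact Submodule.mem_dualAnnihilator L
  refine le_antisymm (Submodule.span_le.2 fun E hE => (Submodule.mem_dualAnnihilator _).2
    fun x hx => Cf.apply_eq_zero_of_mem_idealPart hE hf hx) ?_
  rw [← Submodule.range_dualMap_mkQ_eq, LinearMap.range_eq_map,
    ← PointedCone.span_dual_eq_top (C := (sosCone n k).map W.mkQ) hclosed hpointed,
    Submodule.map_span]
  exact Submodule.span_mono (Set.image_subset_iff.2 fun φ hφ =>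
    dualMap_mkQ_mem_Cf hsos.mem_span_sosupp hφ)
end

section
/- Let n ≥ 2 and 1 ≤ m ≤ n − 1. In ℝ[X₁,…,Xₙ], the ideal I = (X₁² − Xₙ², …, X_m² − Xₙ²) equals the intersection over all sign vectors σ ∈ {−1, +1}^m of the ideals (X₁ + σ₁Xₙ, …, X_m + σ_mXₙ); each of these 2^m ideals is prime, and consequently I is a radical ideal. -/
open MvPolynomial

namespace Stmt11

variable {n : ℕ}

noncomputable def phi (hn : 0 < n) (σ : Fin n → ℝ) (m : ℕ) :
    MvPolynomial (Fin n) ℝ →ₐ[ℝ] MvPolynomial (Fin n) ℝ :=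
  aeval fun j => if (j : ℕ) < m then -(C (σ j) * X (⟨n - 1, by omega⟩ : Fin n)) else X j

noncomputable def sub1 (hn : 0 < n) (k : Fin n) (c : ℝ) :
    MvPolynomial (Fin n) ℝ →ₐ[ℝ] MvPolynomial (Fin n) ℝ :=
  aeval fun j => if j = k then C c * X (⟨n - 1, by omega⟩ : Fin n) else X j

lemma phi_X (hn : 0 < n) (σ : Fin n → ℝ) (m : ℕ) (j : Fin n) :
    phi hn σ m (X j) =
      if (j : ℕ) < m then -(C (σ j) * X (⟨n - 1, by omega⟩ : Fin n)) else X j := by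
  simp [phi]

lemma phi_last (hn : 0 < n) (σ : Fin n → ℝ) (m : ℕ) (hm : m ≤ n - 1) :
    phi hn σ m (X (⟨n - 1, by omega⟩ : Fin n)) = X (⟨n - 1, by omega⟩ : Fin n) := by
  rw [phi_X]
  exact if_neg (by simp; omega)

lemma sub1_X (hn : 0 < n) (k : Fin n) (c : ℝ) (j : Fin n) :
    sub1 hn k c (X j) =
      if j = k then C c * X (⟨n - 1, by omega⟩ : Fin n) else X j := by
  simp [sub1]

lemma sub1_last (hn : 0 < n) (k : Fin n) (hk : (k : ℕ) ≠ n - 1) (c : ℝ) :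
    sub1 hn k c (X (⟨n - 1, by omega⟩ : Fin n)) = X (⟨n - 1, by omega⟩ : Fin n) := by
  rw [sub1_X]
  exact if_neg (by simp [Fin.ext_iff]; omega)

/-- the span of the linear generators, for σ over all of Fin n -/
noncomputable def Jspan (hn : 0 < n) (σ : Fin n → ℝ) (m : ℕ) (hm : m ≤ n) :
    Ideal (MvPolynomial (Fin n) ℝ) :=
  Ideal.span (Set.range fun i : Fin m =>
    X (Fin.castLE hm i) + C (σ (Fin.castLE hm i)) * X (⟨n - 1, by omega⟩ : Fin n))

lemma sub_phi_mem (hn : 0 < n) (σ : Fin n → ℝ) (m : ℕ) (hm : m ≤ n) (p : MvPolynomial (Fin n) ℝ) :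
    p - phi hn σ m p ∈ Jspan hn σ m hm := by
  induction p using MvPolynomial.induction_on with
  | C a => simp [phi]
  | add p q hp hq =>
      have : p + q - phi hn σ m (p + q) = (p - phi hn σ m p) + (q - phi hn σ m q) := by
        rw [map_add]; ring
      rw [this]; exact add_mem hp hq
  | mul_X p j hp =>
      have key : X j - phi hn σ m (X j) ∈ Jspan hn σ m hm := by
        rw [phi_X]
        by_cases h : (j : ℕ) < m
        · rw [if_pos h]
          have : X j - -(C (σ j) * X (⟨n - 1, by omega⟩ : Fin n))
              = X j + C (σ j) * X (⟨n - 1, by omega⟩ : Fin n) := by ring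
        
          rw [this]
          apply Ideal.subset_span
          refine ⟨⟨(j : ℕ), h⟩, ?_⟩
          have hc : Fin.castLE hm ⟨(j : ℕ), h⟩ = j := by
            ext; simp [Fin.castLE]
          show X (Fin.castLE hm ⟨(j : ℕ), h⟩) + _ * _ = _
          rw [hc]
        · rw [if_neg h]; simp
      have : p * X j - phi hn σ m (p * X j)
          = (p - phi hn σ m p) * X j + phi hn σ m p * (X j - phi hn σ m (X j)) := by
        rw [map_mul]; ring
      rw [this]
      exact add_mem (Ideal.mul_mem_right _ _ hp) (Ideal.mul_mem_left _ _ key)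

lemma ker_phi (hn : 0 < n) (σ : Fin n → ℝ) (m : ℕ) (hm : m ≤ n - 1) :
    RingHom.ker (phi hn σ m) = Jspan hn σ m (by omega) := by
  apply le_antisymm
  · intro p hp
    have h0 : phi hn σ m p = 0 := hp
    have := sub_phi_mem hn σ m (by omega) p
    rwa [h0, sub_zero] at this
  · rw [Jspan, Ideal.span_le]
    rintro g ⟨i, rfl⟩
    simp only [SetLike.mem_coe, RingHom.mem_ker]
    have hC : ∀ a : ℝ, phi hn σ m (C a) = C a := fun a => by simp [phi]
    rw [map_add, map_mul, hC, phi_X, phi_last hn σ m hm]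
    rw [if_pos (by simp)]
    ring

lemma sub1_C (hn : 0 < n) (k : Fin n) (c : ℝ) (a : ℝ) :
    sub1 hn k c (C a) = C a := by simp [sub1]

lemma div_lemma (hn : 0 < n) (k : Fin n) (hk : (k : ℕ) ≠ n - 1) (p : MvPolynomial (Fin n) ℝ) :
    ∃ a b q : MvPolynomial (Fin n) ℝ,
      p = a + b * X k + q * (X k ^ 2 - X (⟨n - 1, by omega⟩ : Fin n) ^ 2) ∧
      (∀ c : ℝ, sub1 hn k c a = a) ∧ (∀ c : ℝ, sub1 hn k c b = b) := by
  induction p using MvPolynomial.induction_on with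
  | C r =>
      exact ⟨C r, 0, 0, by ring, fun c => sub1_C hn k c r, fun c => map_zero _⟩
  | add p q hp hq =>
      obtain ⟨a, b, u, heq, ha, hb⟩ := hp
      obtain ⟨a', b', u', heq', ha', hb'⟩ := hq
      exact ⟨a + a', b + b', u + u', by rw [heq, heq']; ring,
        fun c => by rw [map_add, ha c, ha' c],
        fun c => by rw [map_add, hb c, hb' c]⟩
  | mul_X p j hp =>
      obtain ⟨a, b, u, heq, ha, hb⟩ := hp
      by_cases h : j = k
      · subst h
        refine ⟨b * X (⟨n - 1, by omega⟩ : Fin n) ^ 2, a, u * X j + b,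
          by rw [heq]; ring, ?_, ha⟩
        intro c
        rw [map_mul, map_pow, hb c, sub1_last hn j hk c]
      · refine ⟨a * X j, b * X j, u * X j, by rw [heq]; ring, ?_, ?_⟩
        · intro c
          rw [map_mul, ha c, sub1_X, if_neg h]
        · intro c
          rw [map_mul, hb c, sub1_X, if_neg h]

lemma sub1_eval (hn : 0 < n) (k : Fin n) (hk : (k : ℕ) ≠ n - 1) (c : ℝ) (hc : c ^ 2 = 1)
    (a b q : MvPolynomial (Fin n) ℝ)
    (ha : sub1 hn k c a = a) (hb : sub1 hn k c b = b) :
    sub1 hn k c (a + b * X k + q * (X k ^ 2 - X (⟨n - 1, by omega⟩ : Fin n) ^ 2))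
      = a + C c * b * X (⟨n - 1, by omega⟩ : Fin n) := by
  rw [map_add, map_add, map_mul, map_mul, map_sub, map_pow, map_pow,
    sub1_X hn k c k, if_pos rfl, sub1_last hn k hk c, ha, hb]
  have : (C c * X (⟨n - 1, by omega⟩ : Fin n)) ^ 2
      - X (⟨n - 1, by omega⟩ : Fin n) ^ 2 = (0 : MvPolynomial (Fin n) ℝ) := by
    rw [mul_pow, ← map_pow, hc, map_one, one_mul, sub_self]
  rw [this, mul_zero, add_zero]
  ring

lemma phi_C (hn : 0 < n) (σ : Fin n → ℝ) (m : ℕ) (a : ℝ) :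
    phi hn σ m (C a) = C a := by simp [phi]

lemma phi_comp_sub1 (hn : 0 < n) (σ : Fin n → ℝ) (m : ℕ) (hm1 : m + 1 ≤ n - 1) (c : ℝ) :
    (phi hn σ m).comp (sub1 hn (⟨m, by omega⟩ : Fin n) c)
      = phi hn (Function.update σ (⟨m, by omega⟩ : Fin n) (-c)) (m + 1) := by
  apply MvPolynomial.algHom_ext
  intro j
  rw [AlgHom.comp_apply, sub1_X]
  by_cases h : j = (⟨m, by omega⟩ : Fin n)
  · subst h
    rw [if_pos rfl, map_mul, phi_C, phi_last hn σ m (by omega), phi_X,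
      if_pos (by simp), Function.update_self, map_neg]
    ring
  · have hjm : (j : ℕ) ≠ m := fun hh => h (Fin.ext hh)
    rw [if_neg h, phi_X, phi_X, Function.update_of_ne h]
    by_cases h2 : (j : ℕ) < m
    · rw [if_pos h2, if_pos (by omega)]
    · rw [if_neg h2, if_neg (by omega)]

noncomputable def Ispan (hn : 0 < n) (m : ℕ) : Ideal (MvPolynomial (Fin n) ℝ) :=
  Ideal.span ((fun j : Fin n => X j ^ 2 - X (⟨n - 1, by omega⟩ : Fin n) ^ 2) ''
    {j : Fin n | (j : ℕ) < m})

set_option maxHeartbeats 2000000 in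
lemma main (hn : 0 < n) : ∀ m : ℕ, m ≤ n - 1 →
    Ispan hn m = ⨅ σ : {σ : Fin n → ℝ // ∀ j, σ j = 1 ∨ σ j = -1},
      RingHom.ker (phi hn σ.1 m) := by
  intro m
  induction m with
  | zero =>
      intro _
      have h1 : Ispan hn 0 = ⊥ := by
        rw [Ispan]
        have : {j : Fin n | (j : ℕ) < 0} = (∅ : Set (Fin n)) := by
          ext j; simp
        rw [this, Set.image_empty, Ideal.span_empty]
      have h2 : ∀ σ : Fin n → ℝ, phi hn σ 0 = AlgHom.id ℝ _ := by
        intro σ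
        apply MvPolynomial.algHom_ext
        intro j
        rw [phi_X, if_neg (by omega)]
        rfl
      rw [h1]
      apply le_antisymm bot_le
      refine le_trans (iInf_le _ ⟨fun _ => 1, fun _ => Or.inl rfl⟩) ?_
      intro p hp
      have : phi hn (fun _ => 1) 0 p = 0 := hp
      rw [h2] at this
      exact this
  | succ m ih =>
      intro hm1
      have hm : m ≤ n - 1 := by omega
      have ihm := ih hm
      set k : Fin n := ⟨m, by omega⟩ with hkdef
      have hk : (k : ℕ) ≠ n - 1 := by simp [hkdef]; omega
      have hIsucc : Ispan hn (m + 1) =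
          Ideal.span {X k ^ 2 - X (⟨n - 1, by omega⟩ : Fin n) ^ 2} ⊔ Ispan hn m := by
        rw [Ispan, Ispan]
        have hset : (fun j : Fin n => (X j ^ 2 - X (⟨n - 1, by omega⟩ : Fin n) ^ 2 :
                MvPolynomial (Fin n) ℝ)) '' {j : Fin n | (j : ℕ) < m + 1}
            = insert (X k ^ 2 - X (⟨n - 1, by omega⟩ : Fin n) ^ 2)
              ((fun j : Fin n => (X j ^ 2 - X (⟨n - 1, by omega⟩ : Fin n) ^ 2 :
                MvPolynomial (Fin n) ℝ)) '' {j : Fin n | (j : ℕ) < m}) := by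
          ext x
          constructor
          · rintro ⟨j, hj, rfl⟩
            rcases Nat.lt_succ_iff_lt_or_eq.mp hj with h | h
            · exact Or.inr ⟨j, h, rfl⟩
            · left; rw [show j = k from Fin.ext h]
          · rintro (rfl | ⟨j, hj, rfl⟩)
            · exact ⟨k, by simp [hkdef], rfl⟩
            · exact ⟨j, Nat.lt_succ_of_lt hj, rfl⟩
        rw [hset, Ideal.span_insert]
      apply le_antisymm
      · apply le_iInf
        intro σ
        rw [Ispan, Ideal.span_le]
        rintro g ⟨j, hj, rfl⟩
        simp only [Set.mem_setOf_eq] at hj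
        simp only [SetLike.mem_coe, RingHom.mem_ker]
        rw [map_sub, map_pow, map_pow, phi_X, if_pos hj, phi_last hn σ.1 (m + 1) hm1]
        have hs : σ.1 j ^ 2 = 1 := by
          rcases σ.2 j with h | h <;> rw [h] <;> norm_num
        have : (-(C (σ.1 j) * X (⟨n - 1, by omega⟩ : Fin n))) ^ 2
              - X (⟨n - 1, by omega⟩ : Fin n) ^ 2
            = C (σ.1 j ^ 2) * X (⟨n - 1, by omega⟩ : Fin n) ^ 2
              - X (⟨n - 1, by omega⟩ : Fin n) ^ 2 := by
          rw [map_pow]; ring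
        rw [this, hs, map_one, one_mul, sub_self]
      · intro p hp
        obtain ⟨a, b, q, heq, ha, hb⟩ := div_lemma hn k hk p
        have hsub : ∀ c : ℝ, (c = 1 ∨ c = -1) → sub1 hn k c p ∈ Ispan hn m := by
          intro c hc
          rw [ihm, Ideal.mem_iInf]
          intro σ
          have hvalid : ∀ j, (Function.update σ.1 k (-c)) j = 1 ∨
              (Function.update σ.1 k (-c)) j = -1 := by
            intro j
            by_cases h : j = k
            · subst h
              rw [Function.update_self]
              rcases hc with h | h <;> rw [h] <;> [right; left] <;> norm_num
            · rw [Function.update_of_ne h]; exact σ.2 j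
          have h0 : phi hn (Function.update σ.1 k (-c)) (m + 1) p = 0 :=
            Ideal.mem_iInf.mp hp ⟨Function.update σ.1 k (-c), hvalid⟩
          show phi hn σ.1 m (sub1 hn k c p) = 0
          have := AlgHom.congr_fun (phi_comp_sub1 hn σ.1 m hm1 c) p
          rw [AlgHom.comp_apply] at this
          rw [this]
          exact h0
        have e1 : sub1 hn k 1 p
            = a + C (1 : ℝ) * b * X (⟨n - 1, by omega⟩ : Fin n) := by
          rw [heq]; exact sub1_eval hn k hk 1 (by norm_num) a b q (ha 1) (hb 1)
        have e2 : sub1 hn k (-1) p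
            = a + C (-1 : ℝ) * b * X (⟨n - 1, by omega⟩ : Fin n) := by
          rw [heq]; exact sub1_eval hn k hk (-1) (by norm_num) a b q (ha (-1)) (hb (-1))
        have hA : a + b * X (⟨n - 1, by omega⟩ : Fin n) ∈ Ispan hn m := by
          have := hsub 1 (Or.inl rfl)
          rw [e1, map_one, one_mul] at this
          exact this
        have hB : a - b * X (⟨n - 1, by omega⟩ : Fin n) ∈ Ispan hn m := by
          have := hsub (-1) (Or.inr rfl)
          rw [e2, map_neg, map_one] at this
          convert this using 1
          ring
        have hC2 : (C (2⁻¹ : ℝ) : MvPolynomial (Fin n) ℝ) * 2 = 1 := by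
          rw [show (2 : MvPolynomial (Fin n) ℝ) = C (2 : ℝ) from
            (map_ofNat (C : ℝ →+* MvPolynomial (Fin n) ℝ) 2).symm, ← map_mul]
          norm_num
        have ha_mem : a ∈ Ispan hn m := by
          have h := Ideal.add_mem _ hA hB
          have hrw : a = C (2⁻¹ : ℝ) * ((a + b * X (⟨n - 1, by omega⟩ : Fin n))
              + (a - b * X (⟨n - 1, by omega⟩ : Fin n))) := by
            rw [show (a + b * X (⟨n - 1, by omega⟩ : Fin n))
                + (a - b * X (⟨n - 1, by omega⟩ : Fin n)) = 2 * a by ring,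
              ← mul_assoc, hC2, one_mul]
          rw [hrw]
          exact Ideal.mul_mem_left _ _ h
        have hbX : b * X (⟨n - 1, by omega⟩ : Fin n) ∈ Ispan hn m := by
          have h := Ideal.sub_mem _ hA hB
          have hrw : b * X (⟨n - 1, by omega⟩ : Fin n)
              = C (2⁻¹ : ℝ) * ((a + b * X (⟨n - 1, by omega⟩ : Fin n))
                - (a - b * X (⟨n - 1, by omega⟩ : Fin n))) := by
            rw [show (a + b * X (⟨n - 1, by omega⟩ : Fin n))
                - (a - b * X (⟨n - 1, by omega⟩ : Fin n))
                = 2 * (b * X (⟨n - 1, by omega⟩ : Fin n)) by ring,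
              ← mul_assoc, hC2, one_mul]
          rw [hrw]
          exact Ideal.mul_mem_left _ _ h
        have hb_mem : b ∈ Ispan hn m := by
          rw [ihm, Ideal.mem_iInf] at hbX ⊢
          intro σ
          have h := hbX σ
          rw [RingHom.mem_ker, map_mul, phi_last hn σ.1 m hm] at h
          exact (mul_eq_zero.mp h).resolve_right (X_ne_zero _)
        rw [heq, hIsucc]
        refine add_mem (add_mem (Ideal.mem_sup_right ha_mem)
          (Ideal.mem_sup_right (Ideal.mul_mem_right _ _ hb_mem)))
          (Ideal.mem_sup_left (Ideal.mul_mem_left _ _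
            (Ideal.subset_span (Set.mem_singleton _))))

lemma span_eq_ker' (hn : 0 < n) (m : ℕ) (hm : m ≤ n - 1) (σn : Fin n → ℝ) (σ : Fin m → ℝ)
    (hag : ∀ i : Fin m, σn (Fin.castLE (by omega) i) = σ i) :
    Ideal.span (Set.range fun i : Fin m =>
        (X (Fin.castLE (by omega) i) : MvPolynomial (Fin n) ℝ)
          + C (σ i) * X (⟨n - 1, by omega⟩ : Fin n))
      = RingHom.ker (phi hn σn m) := by
  rw [ker_phi hn σn m hm, Jspan]
  congr 1
  apply congrArg
  funext i
  rw [hag i]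

lemma span_eq_ker (hn : 0 < n) (m : ℕ) (hm : m ≤ n - 1) (σ : Fin m → ℝ) :
    Ideal.span (Set.range fun i : Fin m =>
        (X (Fin.castLE (by omega) i) : MvPolynomial (Fin n) ℝ)
          + C (σ i) * X (⟨n - 1, by omega⟩ : Fin n))
      = RingHom.ker (phi hn (fun j => if h : (j : ℕ) < m then σ ⟨(j : ℕ), h⟩ else 1) m) := by
  apply span_eq_ker' hn m hm
  intro i
  rw [dif_pos (by simp)]
  exact congrArg σ (by ext; simp)

end Stmt11

set_option maxHeartbeats 4000000 in
open Stmt11 in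
theorem stmt11 (n m : ℕ) (hn : 2 ≤ n) (hm1 : 1 ≤ m) (hm : m ≤ n - 1) :
    Ideal.span (Set.range fun i : Fin m =>
        (X (Fin.castLE (by omega) i) : MvPolynomial (Fin n) ℝ) ^ 2
          - X (⟨n - 1, by omega⟩ : Fin n) ^ 2)
      = ⨅ σ : {σ : Fin m → ℝ // ∀ i, σ i = 1 ∨ σ i = -1},
          Ideal.span (Set.range fun i : Fin m =>
            (X (Fin.castLE (by omega) i) : MvPolynomial (Fin n) ℝ)
              + C (σ.1 i) * X (⟨n - 1, by omega⟩ : Fin n)) ∧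
    (∀ σ : Fin m → ℝ, (∀ i, σ i = 1 ∨ σ i = -1) →
      (Ideal.span (Set.range fun i : Fin m =>
        (X (Fin.castLE (by omega) i) : MvPolynomial (Fin n) ℝ)
          + C (σ i) * X (⟨n - 1, by omega⟩ : Fin n))).IsPrime) ∧
    (Ideal.span (Set.range fun i : Fin m =>
        (X (Fin.castLE (by omega) i) : MvPolynomial (Fin n) ℝ) ^ 2
          - X (⟨n - 1, by omega⟩ : Fin n) ^ 2)).IsRadical := by
  have hn0 : 0 < n := by omega
  have hmn : m ≤ n := by omega
  have hI : Ideal.span (Set.range fun i : Fin m =>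
        (X (Fin.castLE (by omega : m ≤ n) i) : MvPolynomial (Fin n) ℝ) ^ 2
          - X (⟨n - 1, by omega⟩ : Fin n) ^ 2) = Ispan hn0 m := by
    rw [Ispan]
    congr 1
    ext x
    constructor
    · rintro ⟨i, rfl⟩
      exact ⟨Fin.castLE (by omega) i, by simp, rfl⟩
    · rintro ⟨j, hj, rfl⟩
      simp only [Set.mem_setOf_eq] at hj
      refine ⟨⟨(j : ℕ), hj⟩, ?_⟩
      have hc : Fin.castLE (by omega : m ≤ n) ⟨(j : ℕ), hj⟩ = j := by ext; simp
      show (X (Fin.castLE _ ⟨(j : ℕ), hj⟩) : MvPolynomial (Fin n) ℝ) ^ 2 - _ = _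
      rw [hc]
  have hIker : Ideal.span (Set.range fun i : Fin m =>
        (X (Fin.castLE (by omega : m ≤ n) i) : MvPolynomial (Fin n) ℝ) ^ 2
          - X (⟨n - 1, by omega⟩ : Fin n) ^ 2)
      = ⨅ σ : {σ : Fin m → ℝ // ∀ i, σ i = 1 ∨ σ i = -1},
          Ideal.span (Set.range fun i : Fin m =>
            (X (Fin.castLE (by omega) i) : MvPolynomial (Fin n) ℝ)
              + C (σ.1 i) * X (⟨n - 1, by omega⟩ : Fin n)) := by
    rw [hI, main hn0 m hm]
    apply le_antisymm
    · apply le_iInf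
      intro τ
      have hvalid : ∀ j : Fin n,
          (if h : (j : ℕ) < m then τ.1 ⟨(j : ℕ), h⟩ else 1) = 1 ∨
          (if h : (j : ℕ) < m then τ.1 ⟨(j : ℕ), h⟩ else 1) = -1 := by
        intro j
        by_cases h : (j : ℕ) < m
        · rw [dif_pos h]; exact τ.2 _
        · rw [dif_neg h]; exact Or.inl rfl
      refine iInf_le_of_le ⟨fun j => if h : (j : ℕ) < m then τ.1 ⟨(j : ℕ), h⟩ else 1,
        hvalid⟩ ?_
      refine le_of_eq (span_eq_ker' hn0 m hm _ τ.1 ?_).symm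
      intro i
      show (if h : ((Fin.castLE hmn i : Fin n) : ℕ) < m
          then τ.1 ⟨((Fin.castLE hmn i : Fin n) : ℕ), h⟩ else 1) = τ.1 i
      rw [dif_pos (by simp)]
      exact congrArg τ.1 (by ext; simp)
    · apply le_iInf
      intro σ
      refine iInf_le_of_le ⟨fun i => σ.1 (Fin.castLE hmn i), fun i => σ.2 _⟩ ?_
      refine le_of_eq (span_eq_ker' hn0 m hm σ.1 _ ?_)
      intro i
      rfl
  refine ⟨hIker, ?_, ?_⟩
  · intro σ hσ
    rw [span_eq_ker hn0 m hm σ]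
    exact RingHom.ker_isPrime _
  · rw [hIker]
    apply Ideal.isRadical_iInf
    intro τ
    rw [span_eq_ker hn0 m hm τ.1]
    exact (RingHom.ker_isPrime _).isRadical
end

section
/- Let n ≥ 2 and k ≥ 1, and let real numbers a_{i,j} (1 ≤ i ≤ n−1, 1 ≤ j ≤ k) be given with a_{i,j} ≠ a_{i,j'} whenever j ≠ j'. Define q_i = ∏_{j=1}^k (X_i − a_{i,j} X_n) ∈ ℂ[X₁,…,Xₙ] for i = 1,…,n−1. Then the common zero set {z ∈ ℂⁿ : q₁(z) = ⋯ = q_{n−1}(z) = 0} equals the union over all index tuples j = (j₁,…,j_{n−1}) ∈ {1,…,k}^{n−1} of the complex lines ℂ·v_j, where v_j = (a_{1,j₁},…,a_{n−1,j_{n−1}},1) ∈ ℝⁿ; these are exactly k^{n−1} pairwise distinct complex lines, each spanned by a real vector. -/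
open MvPolynomial

theorem stmt16 (n k : ℕ) (hn : 1 ≤ n) (hk : 1 ≤ k)
    (a : Fin n → Fin k → ℝ) (ha : ∀ i, Function.Injective (a i)) :
    ({z : Fin (n + 1) → ℂ | ∀ i : Fin n,
        eval z (∏ j : Fin k,
          ((X i.castSucc : MvPolynomial (Fin (n + 1)) ℂ)
            - C ((a i j : ℂ)) * X (Fin.last n))) = 0}
      = ⋃ jf : Fin n → Fin k,
          (Submodule.span ℂ
            {(Fin.snoc (fun i => ((a i (jf i) : ℂ))) 1 : Fin (n + 1) → ℂ)} :
              Set (Fin (n + 1) → ℂ))) ∧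
    Function.Injective (fun jf : Fin n → Fin k =>
      Submodule.span ℂ
        {(Fin.snoc (fun i => ((a i (jf i) : ℂ))) 1 : Fin (n + 1) → ℂ)}) ∧
    ∀ jf : Fin n → Fin k,
      Module.finrank ℂ (Submodule.span ℂ
        {(Fin.snoc (fun i => ((a i (jf i) : ℂ))) 1 : Fin (n + 1) → ℂ)}) = 1 := by
  have hvne : ∀ jf : Fin n → Fin k,
      (Fin.snoc (fun i => ((a i (jf i) : ℂ))) 1 : Fin (n + 1) → ℂ) ≠ 0 := by
    intro jf h
    have := congrFun h (Fin.last n)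
    simp [Fin.snoc_last] at this
  refine ⟨?_, ?_, ?_⟩
  · ext z
    simp only [Set.mem_setOf_eq, Set.mem_iUnion, SetLike.mem_coe,
      Submodule.mem_span_singleton]
    constructor
    · intro hz
      have h' : ∀ i : Fin n, ∃ j : Fin k,
          z i.castSucc = (a i j : ℂ) * z (Fin.last n) := by
        intro i
        have := hz i
        rw [map_prod] at this
        obtain ⟨j, -, hj⟩ := Finset.prod_eq_zero_iff.mp this
        refine ⟨j, ?_⟩
        simpa [sub_eq_zero] using hj
      choose jf hjf using h'
      refine ⟨jf, z (Fin.last n), ?_⟩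
      funext x
      induction x using Fin.lastCases with
      | last => simp [Fin.snoc_last]
      | cast i => simp [Fin.snoc_castSucc, hjf i, mul_comm]
    · rintro ⟨jf, c, rfl⟩ i
      rw [map_prod]
      apply Finset.prod_eq_zero (Finset.mem_univ (jf i))
      simp [Fin.snoc_castSucc, Fin.snoc_last, mul_comm]
  · intro jf jf' h
    simp only at h
    have hmem : (Fin.snoc (fun i => ((a i (jf i) : ℂ))) 1 : Fin (n + 1) → ℂ) ∈
        Submodule.span ℂ
          {(Fin.snoc (fun i => ((a i (jf' i) : ℂ))) 1 : Fin (n + 1) → ℂ)} := by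
      rw [← h]; exact Submodule.mem_span_singleton_self _
    obtain ⟨c, hc⟩ := Submodule.mem_span_singleton.mp hmem
    have hlast := congrFun hc (Fin.last n)
    simp [Fin.snoc_last] at hlast
    funext i
    have hi := congrFun hc i.castSucc
    simp [Fin.snoc_castSucc, hlast] at hi
    exact ha i (by exact_mod_cast hi.symm)
  · intro jf
    exact finrank_span_singleton (hvne jf)
end
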